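/- arXiv:2310.05284 — 11 statements merged into one kernel-verified Lean document; each statement's English description precedes it below -/
import Mathlib

section
/- Let B = (b_{ij})_{i,j=0}^{n−1} be an n×n skew-symmetric matrix with complex entries. Then every vertex lies on at most two smoothable edges: there do not exist four pairwise distinct indices j, i, k, l ∈ {0,…,n−1} such that the edges {j,i}, {j,k} and {j,l} are all smoothable for B. -/
/-!
Two smoothable edges `{j,i}` and `{j,k}` at a common vertex force, by adding the two integrality
conditions and using skew-symmetry, a relation `(m + 1) b_{ji} + (m' + 1) b_{jk} = 0` with
`m, m' ∈ ℕ`, so `b_{jk} / b_{ji}` is a negative real number. For three smoothable edges at `j`,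
the ratio `b_{jl} / b_{ji}` is the product of `b_{jl} / b_{jk}` and `b_{jk} / b_{ji}`: it would be
both negative and a product of two negatives.
-/

open BigOperators Matrix

/-- The edge `{i,j}` is *smoothable* for the skew-symmetric matrix `B`:
`B i j ≠ 0` and for every `k ∉ {i,j}` the quotient `(B j k + B k i) / B i j`
is a non-negative integer. -/
def IsSmoothable {n : ℕ} (B : Matrix (Fin n) (Fin n) ℂ) (i j : Fin n) : Prop :=
  B i j ≠ 0 ∧ ∀ k : Fin n, k ≠ i → k ≠ j → ∃ m : ℕ, (B j k + B k i) / B i j = (m : ℂ)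

variable {n : ℕ} {B : Matrix (Fin n) (Fin n) ℂ}

theorem IsSmoothable.exists_add_eq_nat_mul {i j k : Fin n} (h : IsSmoothable B i j)
    (hki : k ≠ i) (hkj : k ≠ j) : ∃ m : ℕ, B j k + B k i = m * B i j := by
  obtain ⟨m, hm⟩ := h.2 k hki hkj
  exact ⟨m, (div_eq_iff h.1).mp hm⟩

theorem IsSmoothable.exists_neg_eq_div (hskew : ∀ i j, B j i = -B i j) {i j k : Fin n}
    (hji : j ≠ i) (hjk : j ≠ k) (hik : i ≠ k) (hi : IsSmoothable B j i)
    (hk : IsSmoothable B j k) : ∃ t : ℝ, t < 0 ∧ B j k / B j i = t := by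
  obtain ⟨m, hm⟩ := hi.exists_add_eq_nat_mul hjk.symm hik.symm
  obtain ⟨m', hm'⟩ := hk.exists_add_eq_nat_mul hji.symm hik
  have hrel : ((m : ℂ) + 1) * B j i + ((m' : ℂ) + 1) * B j k = 0 := by
    linear_combination -hm - hm' + hskew i k + hskew j k + hskew j i
  refine ⟨-((m + 1) / (m' + 1)), by rw [neg_neg_iff_pos]; positivity, ?_⟩
  rw [div_eq_iff hi.1]
  push_cast
  field_simp
  linear_combination hrel

/-- Every vertex lies on at most two smoothable edges: there do
not exist four pairwise distinct indices `j, i, k, l` such that the edges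
`{j,i}`, `{j,k}` and `{j,l}` are all smoothable for the skew-symmetric matrix `B`. -/
theorem at_most_two_smoothable_edges_per_vertex {n : ℕ}
    (B : Matrix (Fin n) (Fin n) ℂ) (hskew : ∀ i j, B j i = -B i j) :
    ¬ ∃ j i k l : Fin n,
        j ≠ i ∧ j ≠ k ∧ j ≠ l ∧ i ≠ k ∧ i ≠ l ∧ k ≠ l ∧
        IsSmoothable B j i ∧ IsSmoothable B j k ∧ IsSmoothable B j l := by
  rintro ⟨j, i, k, l, hji, hjk, hjl, hik, hil, hkl, hi, hk, hl⟩
  obtain ⟨s, hs, hs_eq⟩ := hi.exists_neg_eq_div hskew hji hjk hik hk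
  obtain ⟨t, ht, ht_eq⟩ := hi.exists_neg_eq_div hskew hji hjl hil hl
  obtain ⟨u, hu, hu_eq⟩ := hk.exists_neg_eq_div hskew hjk hjl hkl hl
  have hprod : (t : ℂ) = u * s := by
    rw [← ht_eq, ← hu_eq, ← hs_eq, div_mul_div_cancel₀ hk.1]
  have hts : t = u * s := mod_cast hprod
  exact ht.not_gt (hts ▸ mul_pos_of_neg_of_neg hu hs)
end

section
/- Let B = (b_{ij})_{i,j=0}^{n−1} be an n×n skew-symmetric matrix with complex entries, and let i, j, k ∈ {0,…,n−1} be pairwise distinct indices such that the edges {i,j} and {j,k} are both smoothable for B. Then b_{ij} is a positive rational multiple of b_{jk}; that is, there exists a positive rational number q such that b_{ij} = q · b_{jk}. -/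
open BigOperators Matrix

theorem exists_pos_rat_eq_mul_of_succ_mul_eq {K : Type*} [Field K] [CharZero K] {x y : K}
    {m m' : ℕ} (h : ((m : K) + 1) * x = ((m' : K) + 1) * y) :
    ∃ q : ℚ, 0 < q ∧ x = q * y := by
  refine ⟨(m' + 1) / (m + 1), by positivity, ?_⟩
  have hm : (m : K) + 1 ≠ 0 := Nat.cast_add_one_ne_zero m
  push_cast
  rw [div_mul_eq_mul_div, eq_div_iff hm, mul_comm, h]

namespace IsSmoothable

variable {n : ℕ} {B : Matrix (Fin n) (Fin n) ℂ} {i j : Fin n}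

theorem exists_add_eq_nat_mul_s1 (h : IsSmoothable B i j) {k : Fin n} (hki : k ≠ i)
    (hkj : k ≠ j) : ∃ m : ℕ, B j k + B k i = m * B i j := by
  obtain ⟨m, hm⟩ := h.2 k hki hkj
  exact ⟨m, (div_eq_iff h.1).mp hm⟩

end IsSmoothable

theorem smoothable_edges_pos_rat_multiple_general {n : ℕ}
    (B : Matrix (Fin n) (Fin n) ℂ)
    (i j k : Fin n) (hij : i ≠ j) (hjk : j ≠ k) (hik : i ≠ k)
    (h1 : IsSmoothable B i j) (h2 : IsSmoothable B j k) :
    ∃ q : ℚ, 0 < q ∧ B i j = (q : ℂ) * B j k := by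
  obtain ⟨m, hm⟩ := h1.exists_add_eq_nat_mul_s1 hik.symm hjk.symm
  obtain ⟨m', hm'⟩ := h2.exists_add_eq_nat_mul_s1 hij hik
  exact exists_pos_rat_eq_mul_of_succ_mul_eq (m := m) (m' := m') (by linear_combination hm' - hm)

/-- If `{i,j}` and `{j,k}` are both smoothable edges for the
skew-symmetric matrix `B`, then `B i j` is a positive rational multiple of `B j k`. -/
theorem smoothable_edges_pos_rat_multiple {n : ℕ}
    (B : Matrix (Fin n) (Fin n) ℂ) (hskew : ∀ i j, B j i = -B i j)
    (i j k : Fin n) (hij : i ≠ j) (hjk : j ≠ k) (hik : i ≠ k)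
    (h1 : IsSmoothable B i j) (h2 : IsSmoothable B j k) :
    ∃ q : ℚ, 0 < q ∧ B i j = (q : ℂ) * B j k :=
  smoothable_edges_pos_rat_multiple_general B i j k hij hjk hik h1 h2
end

section
/- Let B = (b_{ij})_{i,j=0}^{n−1} be an n×n skew-symmetric complex matrix each of whose rows sums to zero, and let i ≠ j be indices with b_{ij} ≠ 0. Set θ_{ijk} = (b_{jk} + b_{ki})/b_{ij} for k ∉ {i,j}. Then ∑_{k ∉ {i,j}} θ_{ijk} = 2. Consequently, if the edge {i,j} is smoothable for B, then exactly one of the following holds: (a) there is exactly one index k ∉ {i,j} with θ_{ijk} = 2 and θ_{ijl} = 0 for every other l ∉ {i,j}; or (b) there are exactly two distinct indices k₁, k₂ ∉ {i,j} with θ_{ijk₁} = θ_{ijk₂} = 1 and θ_{ijl} = 0 for every other l ∉ {i,j}. -/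
open BigOperators Matrix

namespace Finset

variable {α R : Type*}

def IsSingleTwo [Zero R] [OfNat R 2] (S : Finset α) (f : α → R) : Prop :=
  ∃ k ∈ S, f k = 2 ∧ ∀ l ∈ S, l ≠ k → f l = 0

def IsPairOfOnes [Zero R] [One R] (S : Finset α) (f : α → R) : Prop :=
  ∃ k₁ k₂, k₁ ≠ k₂ ∧ k₁ ∈ S ∧ k₂ ∈ S ∧ f k₁ = 1 ∧ f k₂ = 1 ∧
    ∀ l ∈ S, l ≠ k₁ → l ≠ k₂ → f l = 0

lemma eq_zero_of_sum_eq_single [DecidableEq α] {S : Finset α} {g : α → ℕ} {k : α}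
    (hk : k ∈ S) (h : ∑ l ∈ S, g l = g k) : ∀ l ∈ S, l ≠ k → g l = 0 := by
  have hrest : ∑ l ∈ S.erase k, g l = 0 := by
    have := S.add_sum_erase g hk
    omega
  intro l hl hlk
  exact sum_eq_zero_iff.1 hrest l (mem_erase.2 ⟨hlk, hl⟩)

lemma isSingleTwo_or_isPairOfOnes_of_sum_eq_two [DecidableEq α] {S : Finset α} {g : α → ℕ}
    (h : ∑ k ∈ S, g k = 2) : S.IsSingleTwo g ∨ S.IsPairOfOnes g := by
  obtain ⟨k, hk, hgk⟩ := exists_ne_zero_of_sum_ne_zero (h ▸ two_ne_zero)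
  have hk_le : g k ≤ 2 := h ▸ single_le_sum (fun _ _ => Nat.zero_le _) hk
  have hsplit := S.add_sum_erase g hk
  interval_cases hgk' : g k
  · contradiction
  · obtain ⟨k₂, hk₂, hgk₂⟩ := exists_ne_zero_of_sum_ne_zero (s := S.erase k) (f := g) (by omega)
    have hgk₂' : g k₂ = 1 := by
      have := single_le_sum (f := g) (fun _ _ => Nat.zero_le _) hk₂
      omega
    obtain ⟨hk₂k, hk₂S⟩ := mem_erase.1 hk₂
    refine Or.inr ⟨k, k₂, hk₂k.symm, hk, hk₂S, hgk', hgk₂', fun l hl hlk hlk₂ => ?_⟩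
    exact eq_zero_of_sum_eq_single hk₂ (by omega) l (mem_erase.2 ⟨hlk, hl⟩) hlk₂
  · exact Or.inl ⟨k, hk, hgk', eq_zero_of_sum_eq_single hk (by omega)⟩

lemma isSingleTwo_or_isPairOfOnes_of_natCast [DecidableEq α] [AddCommMonoidWithOne R]
    [CharZero R] {S : Finset α} {f : α → R} (hnat : ∀ k ∈ S, ∃ m : ℕ, f k = m)
    (h : ∑ k ∈ S, f k = 2) :
    S.IsSingleTwo f ∨ S.IsPairOfOnes f := by
  choose! g hg using hnat
  have hsum : ∑ k ∈ S, g k = 2 := by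
    exact_mod_cast (sum_congr rfl hg).symm.trans h
  rcases isSingleTwo_or_isPairOfOnes_of_sum_eq_two hsum with
    ⟨k, hk, h2, hzero⟩ | ⟨k₁, k₂, hne, hk₁, hk₂, h1, h2, hzero⟩
  · refine Or.inl ⟨k, hk, by simp [hg k hk, h2], fun l hl hlk => ?_⟩
    simp [hg l hl, hzero l hl hlk]
  · refine Or.inr ⟨k₁, k₂, hne, hk₁, hk₂, by simp [hg k₁ hk₁, h1], by simp [hg k₂ hk₂, h2],
      fun l hl hl₁ hl₂ => ?_⟩
    simp [hg l hl, hzero l hl hl₁ hl₂]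

lemma not_isSingleTwo_and_isPairOfOnes [AddMonoidWithOne R] [NeZero (1 : R)]
    {S : Finset α} {f : α → R} : ¬(S.IsSingleTwo f ∧ S.IsPairOfOnes f) := by
  rintro ⟨⟨k, -, -, hzero⟩, ⟨k₁, k₂, hne, hk₁, hk₂, h1, h2, -⟩⟩
  by_cases hk₁k : k₁ = k
  · exact one_ne_zero (h2 ▸ hzero k₂ hk₂ (hk₁k ▸ hne.symm))
  · exact one_ne_zero (h1 ▸ hzero k₁ hk₁ hk₁k)

lemma xor_isSingleTwo_isPairOfOnes_of_natCast [DecidableEq α] [AddCommMonoidWithOne R]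
    [CharZero R] {S : Finset α} {f : α → R} (hnat : ∀ k ∈ S, ∃ m : ℕ, f k = m)
    (h : ∑ k ∈ S, f k = 2) :
    Xor (S.IsSingleTwo f) (S.IsPairOfOnes f) :=
  (xor_iff_or_and_not_and _ _).2
    ⟨isSingleTwo_or_isPairOfOnes_of_natCast hnat h, not_isSingleTwo_and_isPairOfOnes⟩

lemma sum_filter_ne_and_ne {ι M : Type*} [Fintype ι] [DecidableEq ι] [AddCommGroup M]
    (f : ι → M) {i j : ι} (hij : i ≠ j) :
    ∑ k ∈ univ.filter (fun k => k ≠ i ∧ k ≠ j), f k = ∑ k, f k - f i - f j := by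
  have hfilter : univ.filter (fun k => k ≠ i ∧ k ≠ j) = (univ.erase i).erase j := by
    ext k
    simp [and_comm]
  rw [hfilter, sum_erase_eq_sub (mem_erase.2 ⟨hij.symm, mem_univ j⟩),
    sum_erase_eq_sub (mem_univ i)]

end Finset

section SkewSymmetric

variable {ι R : Type*} [AddCommGroup R] {B : Matrix ι ι R}

lemma diag_eq_zero_of_skew [IsAddTorsionFree R] (hskew : ∀ i j, B j i = -B i j) (i : ι) :
    B i i = 0 :=
  self_eq_neg.1 (hskew i i)

lemma sum_col_eq_zero_of_skew [Fintype ι] (hskew : ∀ i j, B j i = -B i j)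
    (hrow : ∀ i, ∑ j, B i j = 0) (i : ι) : ∑ k, B k i = 0 := by
  simp only [hskew i, Finset.sum_neg_distrib, hrow i, neg_zero]

end SkewSymmetric

open Finset in
lemma sum_theta_eq_two {ι K : Type*} [Fintype ι] [DecidableEq ι] [Field K] [IsAddTorsionFree K]
    {B : Matrix ι ι K} (hskew : ∀ i j, B j i = -B i j) (hrow : ∀ i, ∑ j, B i j = 0) {i j : ι}
    (hB : B i j ≠ 0) :
    ∑ k ∈ univ.filter (fun k => k ≠ i ∧ k ≠ j), (B j k + B k i) / B i j = 2 := by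
  have hij : i ≠ j := by
    rintro rfl
    exact hB (diag_eq_zero_of_skew hskew i)
  rw [← sum_div, sum_add_distrib, sum_filter_ne_and_ne _ hij, sum_filter_ne_and_ne _ hij, hrow,
    sum_col_eq_zero_of_skew hskew hrow, diag_eq_zero_of_skew hskew, diag_eq_zero_of_skew hskew,
    hskew i j, div_eq_iff hB]
  ring

theorem theta_sum_eq_two_and_dichotomy_general {n : ℕ}
    (B : Matrix (Fin n) (Fin n) ℂ) (hskew : ∀ i j, B j i = -B i j)
    (hrow : ∀ i, ∑ j, B i j = 0)
    (i j : Fin n) (hB : B i j ≠ 0) :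
    (∑ k ∈ Finset.univ.filter (fun k : Fin n => k ≠ i ∧ k ≠ j),
        (B j k + B k i) / B i j) = 2 ∧
    (IsSmoothable B i j →
      Xor'
        (∃ k : Fin n, k ≠ i ∧ k ≠ j ∧ (B j k + B k i) / B i j = 2 ∧
          ∀ l : Fin n, l ≠ i → l ≠ j → l ≠ k → (B j l + B l i) / B i j = 0)
        (∃ k₁ k₂ : Fin n, k₁ ≠ k₂ ∧ k₁ ≠ i ∧ k₁ ≠ j ∧ k₂ ≠ i ∧ k₂ ≠ j ∧
          (B j k₁ + B k₁ i) / B i j = 1 ∧ (B j k₂ + B k₂ i) / B i j = 1 ∧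
          ∀ l : Fin n, l ≠ i → l ≠ j → l ≠ k₁ → l ≠ k₂ →
            (B j l + B l i) / B i j = 0)) := by
  have hsum := sum_theta_eq_two hskew hrow hB
  refine ⟨hsum, fun hsm => ?_⟩
  have hnat : ∀ k ∈ Finset.univ.filter (fun k : Fin n => k ≠ i ∧ k ≠ j),
      ∃ m : ℕ, (B j k + B k i) / B i j = m := fun k hk => by
    obtain ⟨hki, hkj⟩ := (Finset.mem_filter.1 hk).2
    exact hsm.2 k hki hkj
  have := Finset.xor_isSingleTwo_isPairOfOnes_of_natCast hnat hsum
  simp only [Finset.IsSingleTwo, Finset.IsPairOfOnes, Finset.mem_filter, Finset.mem_univ,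
    true_and, and_assoc, and_imp] at this
  exact this

/-- For a skew-symmetric matrix whose rows sum to zero and
`B i j ≠ 0`, the numbers `θ_{ijk} = (B j k + B k i)/(B i j)` for `k ∉ {i,j}` sum
to `2`; hence if the edge `{i,j}` is smoothable, then exactly one of the following
holds: (a) exactly one `k` has `θ_{ijk} = 2` and all other `θ` vanish; or
(b) exactly two distinct `k₁, k₂` have `θ = 1` and all other `θ` vanish. -/
theorem theta_sum_eq_two_and_dichotomy {n : ℕ}
    (B : Matrix (Fin n) (Fin n) ℂ) (hskew : ∀ i j, B j i = -B i j)
    (hrow : ∀ i, ∑ j, B i j = 0)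
    (i j : Fin n) (hij : i ≠ j) (hB : B i j ≠ 0) :
    (∑ k ∈ Finset.univ.filter (fun k : Fin n => k ≠ i ∧ k ≠ j),
        (B j k + B k i) / B i j) = 2 ∧
    (IsSmoothable B i j →
      Xor'
        (∃ k : Fin n, k ≠ i ∧ k ≠ j ∧ (B j k + B k i) / B i j = 2 ∧
          ∀ l : Fin n, l ≠ i → l ≠ j → l ≠ k → (B j l + B l i) / B i j = 0)
        (∃ k₁ k₂ : Fin n, k₁ ≠ k₂ ∧ k₁ ≠ i ∧ k₁ ≠ j ∧ k₂ ≠ i ∧ k₂ ≠ j ∧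
          (B j k₁ + B k₁ i) / B i j = 1 ∧ (B j k₂ + B k₂ i) / B i j = 1 ∧
          ∀ l : Fin n, l ≠ i → l ≠ j → l ≠ k₁ → l ≠ k₂ →
            (B j l + B l i) / B i j = 0)) :=
  theta_sum_eq_two_and_dichotomy_general B hskew hrow i j hB
end

section
/- Let n ≥ 3, let 1 ≤ k < n/2, let d = gcd(n,k), and let I = (i_0,…,i_{d−1}) be a sequence of zeros and ones with i_s ≤ k − 1 for every s. Then the matrix C_{n,k,I} is skew-symmetric, each of its rows sums to zero, and for every i ∈ {0,…,n−1} the edge {i, (i+1) mod n} is smoothable for C_{n,k,I}; in particular C_{n,k,I} has a full smoothable cycle. -/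
open BigOperators Matrix

/-- `B` has a *full smoothable cycle*: there is a permutation `σ` of `{0,…,n−1}`
such that every edge `{σ(i), σ((i+1) mod n)}` is smoothable for `B`. -/
def HasFullSmoothableCycle {n : ℕ} (B : Matrix (Fin n) (Fin n) ℂ) : Prop :=
  ∃ σ : Equiv.Perm (Fin n), ∀ i : Fin n,
    IsSmoothable B (σ i)
      (σ ⟨(i.val + 1) % n, Nat.mod_lt _ (Nat.lt_of_le_of_lt (Nat.zero_le _) i.isLt)⟩)

/-- The vector `r(l) ∈ ℂ^n`: `r(l)_0 = 0`, `r(l)_m = 1` for `1 ≤ m ≤ l`,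
`r(l)_m = −1` for `n − l ≤ m ≤ n−1`, and `r(l)_m = 0` otherwise. -/
def rVec (n l m : ℕ) : ℂ :=
  if m = 0 then 0 else if m ≤ l then 1 else if n - l ≤ m then -1 else 0

/-- The matrix `C_{n,k,I}` for a sequence `I` of zeros and ones of length
`d = gcd(n,k)`: its `i`-th row is `T^i(r(k − I(i mod d)))`. -/
def CnkI (n k : ℕ) (I : ℕ → ℕ) : Matrix (Fin n) (Fin n) ℂ :=
  Matrix.of fun i j => rVec n (k - I (i.val % Nat.gcd n k)) ((j.val + n - i.val) % n)


/-!
Row `i` of `C = C_{n,k,I}` is the cyclic shift by `i` of `r(lᵢ)`, where `lᵢ = k - I(i mod d)` lies in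
`{k - 1, k}`, so `C i j = r(lᵢ)_{j - i}` with `j - i` taken in `ℤ/n`. Since `2 lᵢ < n`, the vector
`r(l)` is odd: `r(l)_{-a} = -r(l)_a`. This makes every row sum vanish, and it gives skew-symmetry:
rows `i, j` with `lᵢ ≠ lⱼ` have `i ≢ j (mod d)`, so their offset `j - i` avoids `±k` (multiples
of `d`), the only offsets at which `r(k - 1)` and `r(k)` differ.
For the edge `{i, i + 1}` one has `C i (i+1) = r(lᵢ)_1 = 1`, and for `c = i + m` the quotient is
`r(lᵢ₊₁)_{m-1} - r(lᵢ)_m`; it is `0`, `1` or `2` because `r(l)` is a non-increasing step function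
on `1, …, n - 1` and `lᵢ, lᵢ₊₁` differ by at most one. The identity permutation is then a full
smoothable cycle.
-/

theorem Fin.val_mod_eq_of_dvd_val_sub {n d : ℕ} [NeZero n] (hd : d ∣ n) {i j : Fin n}
    (h : d ∣ (j - i).val) : i.val % d = j.val % d := by
  have hn : (j - i).val + i.val ≡ j.val [MOD n] := by
    rw [Nat.ModEq, ← Fin.val_add, sub_add_cancel, Nat.mod_eq_of_lt j.isLt]
  have h0 : (j - i).val ≡ 0 [MOD d] := (Nat.modEq_zero_iff_dvd).2 h
  have := (h0.add_right i.val).symm.trans (hn.of_dvd hd)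
  rwa [zero_add] at this

theorem Fin.mk_add_one_mod_eq_add_one {n : ℕ} [NeZero n] (i : Fin n) (h : (i.val + 1) % n < n) :
    (⟨(i.val + 1) % n, h⟩ : Fin n) = i + 1 := by
  rw [Fin.ext_iff, Fin.val_add, Fin.val_one', Nat.add_mod_mod]

section rVec

variable {n l : ℕ}

theorem rVec_val_neg [NeZero n] (hl : 2 * l < n) (a : Fin n) :
    rVec n l (-a).val = -rVec n l a.val := by
  rcases eq_or_ne a 0 with rfl | ha
  · simp [rVec]
  have ha' : a.val ≠ 0 := Fin.val_ne_iff.2 ha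
  have := a.isLt
  rw [Fin.val_neg', Nat.mod_eq_of_lt (by omega)]
  unfold rVec
  split_ifs <;> first | omega | norm_num

theorem sum_rVec_val_eq_zero [NeZero n] (hl : 2 * l < n) : ∑ a : Fin n, rVec n l a.val = 0 := by
  refine self_eq_neg.1 ?_
  calc ∑ a : Fin n, rVec n l a.val = ∑ a : Fin n, rVec n l (-a).val :=
        (Fintype.sum_equiv (Equiv.neg _) _ _ fun _ => rfl).symm
    _ = -∑ a : Fin n, rVec n l a.val := by simp only [rVec_val_neg hl, Finset.sum_neg_distrib]

theorem rVec_eq_of_ne {k a : ℕ} (hl : l ≤ k) (hkl : k ≤ l + 1) (hak : a ≠ k) (hank : a ≠ n - k) :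
    rVec n l a = rVec n k a := by
  unfold rVec
  split_ifs <;> first | rfl | omega

theorem rVec_eq_intCast (n l m : ℕ) :
    rVec n l m = ((if m = 0 then 0 else if m ≤ l then 1 else if n - l ≤ m then -1 else 0 : ℤ) : ℂ) := by
  unfold rVec
  split_ifs <;> simp

theorem exists_rVec_pred_sub_rVec_eq_natCast {l' m : ℕ} (hl : l ≤ l' + 1) (hl' : l' ≤ l + 1)
    (hln : 2 * l < n) (hm : 2 ≤ m) : ∃ p : ℕ, rVec n l' (m - 1) - rVec n l m = p := by
  rw [rVec_eq_intCast, rVec_eq_intCast, ← Int.cast_sub]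
  suffices h : ∀ z : ℤ, 0 ≤ z → ∃ p : ℕ, (z : ℂ) = p from h _ (by split_ifs <;> omega)
  exact fun z hz => (Int.eq_ofNat_of_zero_le hz).imp fun p hp => by rw [hp, Int.cast_natCast]

end rVec

section CnkI

variable {n k : ℕ} {I : ℕ → ℕ}

theorem CnkI_apply [NeZero n] (i j : Fin n) :
    CnkI n k I i j = rVec n (k - I (i.val % Nat.gcd n k)) (j - i).val := by
  simp only [CnkI, Matrix.of_apply, Fin.sub_def]
  congr 2
  omega

theorem CnkI_row_bounds (hI : ∀ s < Nat.gcd n k, I s ≤ 1 ∧ I s + 1 ≤ k) (i : Fin n) :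
    1 ≤ k - I (i.val % Nat.gcd n k) ∧ k ≤ k - I (i.val % Nat.gcd n k) + 1 := by
  have := hI (i.val % Nat.gcd n k) (Nat.mod_lt _ (Nat.gcd_pos_of_pos_left k i.pos))
  omega

theorem CnkI_apply_swap (hI : ∀ s < Nat.gcd n k, I s ≤ 1 ∧ I s + 1 ≤ k) (hk : 2 * k < n)
    (i j : Fin n) : CnkI n k I j i = -CnkI n k I i j := by
  have : NeZero n := ⟨by omega⟩
  set d := Nat.gcd n k
  rw [CnkI_apply, CnkI_apply]
  by_cases hij : i.val % d = j.val % d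
  · rw [hij, ← neg_sub j i, rVec_val_neg (by omega)]
  have hoff : ∀ {x y : Fin n}, x.val % d ≠ y.val % d → (y - x).val ≠ k ∧ (y - x).val ≠ n - k :=
    fun hxy => ⟨fun h => hxy (Fin.val_mod_eq_of_dvd_val_sub (Nat.gcd_dvd_left n k)
        (h ▸ Nat.gcd_dvd_right n k)),
      fun h => hxy (Fin.val_mod_eq_of_dvd_val_sub (Nat.gcd_dvd_left n k)
        (h ▸ Nat.dvd_sub (Nat.gcd_dvd_left n k) (Nat.gcd_dvd_right n k)))⟩
  rw [rVec_eq_of_ne (Nat.sub_le _ _) (CnkI_row_bounds hI j).2 (hoff (Ne.symm hij)).1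
      (hoff (Ne.symm hij)).2,
    rVec_eq_of_ne (Nat.sub_le _ _) (CnkI_row_bounds hI i).2 (hoff hij).1 (hoff hij).2, ← neg_sub j i,
    rVec_val_neg hk]

theorem CnkI_row_sum (hk : 2 * k < n) (i : Fin n) : ∑ j, CnkI n k I i j = 0 := by
  have : NeZero n := ⟨by omega⟩
  calc ∑ j, CnkI n k I i j = ∑ j : Fin n, rVec n (k - I (i.val % Nat.gcd n k)) (j - i).val := by
        simp only [CnkI_apply]
    _ = ∑ a : Fin n, rVec n (k - I (i.val % Nat.gcd n k)) a.val :=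
        Fintype.sum_equiv (Equiv.subRight i) _ _ fun _ => rfl
    _ = 0 := sum_rVec_val_eq_zero (by omega)

theorem isSmoothable_CnkI_add_one [NeZero n] (hI : ∀ s < Nat.gcd n k, I s ≤ 1 ∧ I s + 1 ≤ k)
    (hk : 2 * k < n) (i : Fin n) : IsSmoothable (CnkI n k I) i (i + 1) := by
  obtain ⟨hL_i, hkL_i⟩ := CnkI_row_bounds hI i
  obtain ⟨hL_j, hkL_j⟩ := CnkI_row_bounds hI (i + 1)
  have h1 : ((1 : Fin n) : ℕ) = 1 := by rw [Fin.val_one', Nat.mod_eq_of_lt (by omega)]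
  have hC : CnkI n k I i (i + 1) = 1 := by
    rw [CnkI_apply, add_sub_cancel_left, h1, rVec, if_neg one_ne_zero, if_pos hL_i]
  refine ⟨hC ▸ one_ne_zero, fun c hci hcj => ?_⟩
  rw [hC, div_one, CnkI_apply_swap hI hk i c, CnkI_apply, CnkI_apply, sub_add_eq_sub_sub]
  have hm0 : (c - i).val ≠ 0 := Fin.val_ne_iff.2 (sub_ne_zero.2 hci)
  have hm1 : (c - i).val ≠ 1 := fun h => hcj (by
    rw [← sub_eq_iff_eq_add', Fin.ext_iff, h, h1])
  rw [Fin.coe_sub_iff_le.2 (by rw [Fin.le_def, h1]; omega), h1, ← sub_eq_add_neg]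
  exact exists_rVec_pred_sub_rVec_eq_natCast (by omega) (by omega) (by omega) (by omega)

end CnkI

/-- For `n ≥ 3`, `1 ≤ k < n/2` and a sequence `I` of zeros and
ones of length `d = gcd(n,k)` with each `i_s ≤ k − 1`, the matrix `C_{n,k,I}` is
skew-symmetric, its rows sum to zero, every edge `{i, (i+1) mod n}` is smoothable
for it, and it has a full smoothable cycle. -/
theorem CnkI_has_full_smoothable_cycle (n k : ℕ)
    (hk2 : 2 * k < n)
    (I : ℕ → ℕ) (hI : ∀ s < Nat.gcd n k, I s ≤ 1 ∧ I s + 1 ≤ k) :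
    (∀ i j, CnkI n k I j i = -CnkI n k I i j) ∧
    (∀ i, ∑ j, CnkI n k I i j = 0) ∧
    (∀ i : Fin n,
      IsSmoothable (CnkI n k I) i ⟨(i.val + 1) % n, Nat.mod_lt _ (by omega)⟩) ∧
    HasFullSmoothableCycle (CnkI n k I) := by
  have : NeZero n := ⟨by omega⟩
  have hsm : ∀ i : Fin n, IsSmoothable (CnkI n k I) i ⟨(i.val + 1) % n, Nat.mod_lt _ (by omega)⟩ :=
    fun i => Fin.mk_add_one_mod_eq_add_one i _ ▸ isSmoothable_CnkI_add_one hI hk2 i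
  exact ⟨CnkI_apply_swap hI hk2, fun i => CnkI_row_sum hk2 i, hsm, Equiv.refl _, hsm⟩
end

section
/- Let k ≥ 1 and n = 2(2k+1). Then the matrix Y_n is skew-symmetric, each of its rows sums to zero, and for every i ∈ {0,…,n−1} the edge {i, (i+1) mod n} is smoothable for Y_n; in particular Y_n has a full smoothable cycle. -/
open BigOperators Matrix

/-- Row `r_0` of `Y_n`: `(0, 2, 1^{n/2−2}, (−1)^{n/2})`. -/
def yRow0 (n t : ℕ) : ℂ :=
  if t = 0 then 0 else if t = 1 then 2 else if t < n / 2 then 1 else -1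

/-- Row `r_1` of `Y_n`: `(−2, 0, 1^{n/2}, (−1)^{n/2−2})`. -/
def yRow1 (n t : ℕ) : ℂ :=
  if t = 0 then -2 else if t = 1 then 0 else if t < n / 2 + 2 then 1 else -1

/-- The matrix `Y_n` (for `n = 2(2k+1)`): rows `r_0`, `r_1` as above and
`r_i = T²(r_{i−2})` for `2 ≤ i ≤ n−1`. -/
def Ymat (n : ℕ) : Matrix (Fin n) (Fin n) ℂ :=
  Matrix.of fun i j =>
    if i.val % 2 = 0 then yRow0 n ((j.val + n - i.val) % n)
    else yRow1 n ((j.val + n - (i.val - 1)) % n)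

/-!
The entry `Y_n i j` depends only on the parity of `i` and on the cyclic offset `j - i`, and in
these terms each claim becomes a check on offsets that is uniform in `k` because `n / 2 = 2k + 1`
is odd. Skew-symmetry compares offset `d` in a row of parity `p` with offset `n - d` in a row of
parity `p + d`. A row sums to zero because the entries at offsets `d` and `d + n / 2` cancel
for `2 ≤ d < n / 2 - 1`, and the three remaining pairs add up to `0`. For the edge `{i, i + 1}`,
skew-symmetry turns the quotient in the definition of smoothability into
`(Y_n (i+1) k - Y_n i k) / Y_n i (i+1)`, which is `0` or `1` for every `k ∉ {i, i+1}`.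
-/

open Finset

/-- `yEntry n p d` is the entry `Y_n i j` for `i ≡ p (mod 2)` and `j ≡ i + d (mod n)`; the odd
rows are read off from `i` rather than from `i - 1` as in `Ymat`. -/
def yEntry (n p d : ℕ) : ℂ :=
  if d = 0 then 0
  else if p = 0 then (if d = 1 then 2 else if d < n / 2 then 1 else -1)
  else if d = n - 1 then -2 else if d ≤ n / 2 then 1 else -1

lemma yRow1_add_one_mod {n d : ℕ} (hn : 1 < n) (hd : d < n) :
    yRow1 n ((d + 1) % n) = yEntry n 1 d := by
  rcases eq_or_ne d (n - 1) with rfl | hd'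
  · rw [Nat.sub_add_cancel hn.le, Nat.mod_self]
    simp [yRow1, yEntry, Nat.sub_ne_zero_of_lt hn]
  · rw [Nat.mod_eq_of_lt (by omega)]
    unfold yRow1 yEntry
    split_ifs <;> first | rfl | omega | contradiction

lemma Ymat_apply {n : ℕ} (hn : 1 < n) (i j : Fin n) :
    Ymat n i j = yEntry n (i.val % 2) (j - i).val := by
  have hsub : (j - i).val = (j.val + n - i.val) % n := by
    rw [Fin.val_sub]; congr 1; omega
  rcases Nat.mod_two_eq_zero_or_one i.val with hi | hi
  · simp only [Ymat, of_apply, hi, if_true, hsub, yRow0, yEntry]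
  · have hodd : (j.val + n - (i.val - 1)) % n = ((j - i).val + 1) % n := by
      rw [hsub, Nat.mod_add_mod]; congr 1; omega
    simp only [Ymat, of_apply, hi, one_ne_zero, if_false, hodd]
    exact yRow1_add_one_mod hn (Fin.isLt _)

lemma mod_two_add_val_sub {n : ℕ} (hn : Even n) (i j : Fin n) :
    (i.val % 2 + (j - i).val) % 2 = j.val % 2 := by
  obtain ⟨m, rfl⟩ := hn
  rw [Nat.mod_add_mod, Fin.val_sub, Nat.add_mod, Nat.mod_mod_of_dvd _ ⟨m, (two_mul m).symm⟩,
    ← Nat.add_mod]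
  have := i.isLt
  omega

lemma yEntry_reverse {k n p d : ℕ} (hn : n = 2 * (2 * k + 1)) (hp : p < 2) (hd : 0 < d)
    (hdn : d < n) : yEntry n ((p + d) % 2) (n - d) = -yEntry n p d := by
  subst hn
  unfold yEntry
  split_ifs <;> first | omega | norm_num

lemma Ymat_transpose_apply {k n : ℕ} (hn : n = 2 * (2 * k + 1)) (i j : Fin n) :
    Ymat n j i = -Ymat n i j := by
  have h1 : 1 < n := by omega
  have : NeZero n := ⟨by omega⟩
  rcases eq_or_ne i j with rfl | hij
  · simp [Ymat_apply h1, yEntry]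
  have hd : (i - j).val = n - (j - i).val := by
    rw [← neg_sub j i, Fin.val_neg, if_neg (sub_ne_zero.mpr hij.symm)]
  rw [Ymat_apply h1, Ymat_apply h1, ← mod_two_add_val_sub ⟨2 * k + 1, by omega⟩ i j, hd]
  exact yEntry_reverse hn (Nat.mod_lt _ two_pos)
    (Nat.pos_of_ne_zero (Fin.val_ne_zero_iff.mpr (sub_ne_zero.mpr hij.symm))) (Fin.isLt _)

lemma sum_range_yEntry {k n p : ℕ} (hk : 1 ≤ k) (hn : n = 2 * (2 * k + 1)) (hp : p < 2) :
    ∑ d ∈ range n, yEntry n p d = 0 := by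
  obtain ⟨m, rfl⟩ : ∃ m, k = m + 1 := ⟨k - 1, by omega⟩
  rw [show n = (2 * m + 3) + (2 * m + 3) by omega, sum_range_add, ← sum_add_distrib,
    sum_range_succ, sum_range_succ', sum_range_succ', sum_eq_zero, zero_add]
  · interval_cases p <;> simp (disch := omega) only [yEntry, if_pos, if_neg] <;> norm_num
  · intro d hd
    rw [mem_range] at hd
    unfold yEntry
    split_ifs <;> first | omega | norm_num

lemma sum_Ymat_row {k n : ℕ} (hk : 1 ≤ k) (hn : n = 2 * (2 * k + 1)) (i : Fin n) :
    ∑ j, Ymat n i j = 0 := by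
  have : NeZero n := ⟨by omega⟩
  calc ∑ j, Ymat n i j = ∑ j : Fin n, yEntry n (i.val % 2) (j - i).val :=
        sum_congr rfl fun j _ => Ymat_apply (by omega) i j
    _ = ∑ d : Fin n, yEntry n (i.val % 2) d.val :=
        Fintype.sum_equiv (Equiv.subRight i) _ _ fun _ => rfl
    _ = ∑ d ∈ range n, yEntry n (i.val % 2) d := Fin.sum_univ_eq_sum_range _ n
    _ = 0 := sum_range_yEntry hk hn (Nat.mod_lt _ two_pos)

lemma isSmoothable_of_sub_eq_mul {n : ℕ} {B : Matrix (Fin n) (Fin n) ℂ}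
    (hB : ∀ a b, B b a = -B a b) {i j : Fin n} (hij : B i j ≠ 0)
    (h : ∀ k, k ≠ i → k ≠ j → ∃ m : ℕ, B j k - B i k = m * B i j) : IsSmoothable B i j :=
  ⟨hij, fun k hki hkj => (h k hki hkj).imp fun m hm => by
    rw [hB i k, ← sub_eq_add_neg, hm, mul_div_cancel_right₀ _ hij]⟩

lemma yEntry_one_ne_zero (n p : ℕ) : yEntry n p 1 ≠ 0 := by
  unfold yEntry
  split_ifs <;> first | contradiction | norm_num

lemma exists_yEntry_sub_eq_mul {k n p e : ℕ} (hn : n = 2 * (2 * k + 1)) (hp : p < 2) (he : 2 ≤ e)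
    (hen : e < n) :
    ∃ m : ℕ, yEntry n ((p + 1) % 2) (e - 1) - yEntry n p e = m * yEntry n p 1 := by
  subst hn
  interval_cases p <;> simp (disch := omega) only [yEntry, if_pos, if_neg] <;> split_ifs <;> first
    | omega
    | (refine ⟨0, ?_⟩; norm_num; done)
    | (refine ⟨1, ?_⟩; norm_num)

lemma Ymat_isSmoothable_add_one {k n : ℕ} [NeZero n] (hn : n = 2 * (2 * k + 1)) (i : Fin n) :
    IsSmoothable (Ymat n) i (i + 1) := by
  have h1 : 1 < n := by omega
  have hstep : (i + 1 - i).val = 1 := by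
    rw [add_sub_cancel_left, Fin.val_one', Nat.mod_eq_of_lt h1]
  have hparity : (i + 1).val % 2 = (i.val % 2 + 1) % 2 := by
    rw [← mod_two_add_val_sub ⟨2 * k + 1, by omega⟩ i (i + 1), hstep]
  refine isSmoothable_of_sub_eq_mul (Ymat_transpose_apply hn)
    (by rw [Ymat_apply h1, hstep]; exact yEntry_one_ne_zero n _) fun j hji hji' => ?_
  have hne : j - i ≠ 0 := sub_ne_zero.mpr hji
  have hj1 : (j - i).val ≠ 1 := fun h =>
    hji' (sub_eq_iff_eq_add'.mp (Fin.ext (by rw [h, Fin.val_one', Nat.mod_eq_of_lt h1])))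
  rw [Ymat_apply h1, Ymat_apply h1, Ymat_apply h1, hparity, hstep, ← sub_sub,
    Fin.val_sub_one_of_ne_zero hne]
  exact exists_yEntry_sub_eq_mul hn (Nat.mod_lt _ two_pos)
    (by have := Fin.val_ne_zero_iff.mpr hne; omega) (Fin.isLt _)

/-- For `k ≥ 1` and `n = 2(2k+1)`, the matrix `Y_n` is
skew-symmetric, its rows sum to zero, every edge `{i, (i+1) mod n}` is smoothable
for it, and it has a full smoothable cycle. -/
theorem Ymat_has_full_smoothable_cycle (k n : ℕ) (hk : 1 ≤ k)
    (hn : n = 2 * (2 * k + 1)) :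
    (∀ i j, Ymat n j i = -Ymat n i j) ∧
    (∀ i, ∑ j, Ymat n i j = 0) ∧
    (∀ i : Fin n,
      IsSmoothable (Ymat n) i ⟨(i.val + 1) % n, Nat.mod_lt _ (by omega)⟩) ∧
    HasFullSmoothableCycle (Ymat n) := by
  have : NeZero n := ⟨by omega⟩
  have hsucc (i : Fin n) :
      IsSmoothable (Ymat n) i ⟨(i.val + 1) % n, Nat.mod_lt _ (by omega)⟩ := by
    convert Ymat_isSmoothable_add_one hn i
    rw [Fin.val_add, Fin.val_one', Nat.mod_eq_of_lt (by omega : 1 < n)]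
  exact ⟨Ymat_transpose_apply hn, sum_Ymat_row hk hn, hsucc, Equiv.refl _, hsucc⟩
end

section
/- Let n ≥ 3 and let B = (b_{ij})_{i,j=0}^{n−1} be an n×n skew-symmetric complex matrix each of whose rows sums to zero. Suppose that for every i ∈ {0,…,n−1} the edge {i, (i+1) mod n} is smoothable for B and that b_{i,(i+1) mod n} = 1 for every i. Then there exist an integer 1 ≤ k < n/2, a sequence I = (i_0,…,i_{d−1}) of zeros and ones of length d = gcd(n,k), and an integer c such that b_{ij} = (C_{n,k,I})_{(i+c) mod n, (j+c) mod n} for all i, j ∈ {0,…,n−1}. -/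
/-
Smoothability of the edge `{x, x+1}` together with `b_{x,x+1} = 1` says that
`b_{i,x} - b_{i,x+1}` is a natural number, so along row `i` the entries `t ↦ b_{i,i+t}`
descend from `b_{i,i+1} = 1` to `b_{i,i-1} = -1` in natural steps. The row is therefore `1`
on an initial run, `-1` on a final run and `0` in between, and the zero row sum forces both
runs to have the same length `l_i`: row `i` is `T^i r(l_i)` with `2 l_i < n`.
Skew-symmetry turns this into `t ≤ l_i ↔ t ≤ l_{i+t}`. For `k = max l_i`, the predicate
`k ≤ l_i` is then invariant under the shift by `k`, and `k - 1 ≤ l_i` under the shift by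
`k - 1`; since `k - (k - 1) = 1` every `l_i` is `k - 1` or `k`, and Bézout makes `l`
periodic modulo `gcd(n, k)`.
-/

open BigOperators Matrix

open Finset

theorem exists_nat_add_of_nat_steps {R : Type*} [AddMonoidWithOne R] {f : ℕ → R} {a b : ℕ}
    (hstep : ∀ t ∈ Set.Ico a b, ∃ m : ℕ, f t = f (t + 1) + m) {s t : ℕ}
    (has : a ≤ s) (hst : s ≤ t) (htb : t ≤ b) : ∃ m : ℕ, f s = f t + m := by
  induction t, hst using Nat.le_induction with
  | base => exact ⟨0, by simp⟩
  | succ t hst ih =>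
    obtain ⟨m, hm⟩ := ih (by omega)
    obtain ⟨m', hm'⟩ := hstep t ⟨by omega, by omega⟩
    exact ⟨m' + m, by rw [hm, hm', Nat.cast_add, add_assoc]⟩

theorem exists_int_antitoneOn_of_nat_steps {R : Type*} [AddGroupWithOne R] [CharZero R]
    {f : ℕ → R} {a b : ℕ} {z : ℤ} (ha : f a = z)
    (hstep : ∀ t ∈ Set.Ico a b, ∃ m : ℕ, f t = f (t + 1) + m) :
    ∃ g : ℕ → ℤ, AntitoneOn g (Set.Icc a b) ∧ ∀ t ∈ Set.Icc a b, f t = g t := by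
  have hdrop : ∀ t, ∃ m : ℕ, t ∈ Set.Icc a b → f a = f t + m := fun t => by
    by_cases ht : t ∈ Set.Icc a b
    · obtain ⟨m, hm⟩ := exists_nat_add_of_nat_steps hstep le_rfl ht.1 ht.2
      exact ⟨m, fun _ => hm⟩
    · exact ⟨0, fun h => absurd h ht⟩
  choose m hm using hdrop
  refine ⟨fun t => z - m t, fun s hs t ht hst => ?_, fun t ht => ?_⟩
  · obtain ⟨m', hm'⟩ := exists_nat_add_of_nat_steps hstep hs.1 hst ht.2
    have hcast : ((m t : ℕ) : R) = ((m' + m s : ℕ) : R) := by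
      have := (hm s hs).symm.trans (hm t ht)
      rw [hm', add_assoc] at this
      push_cast
      exact (add_left_cancel this).symm
    have := Nat.cast_inj.mp hcast
    show z - m t ≤ z - m s
    omega
  · push_cast
    rw [← ha, hm t ht, add_sub_cancel_right]

theorem lt_add_card_filter_Ico_iff {P : ℕ → Prop} [DecidablePred P] {a b t : ℕ}
    (hdown : ∀ s t, a ≤ s → s ≤ t → t < b → P t → P s) (hat : a ≤ t) (htb : t < b) :
    t < a + #{s ∈ Ico a b | P s} ↔ P t := by
  constructor
  · intro hlt
    by_contra hPt
    have hsub : {s ∈ Ico a b | P s} ⊆ Ico a t := fun s hs => by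
      simp only [mem_filter, mem_Ico] at hs ⊢
      refine ⟨hs.1.1, lt_of_not_ge fun hts => hPt (hdown t s hat hts hs.1.2 hs.2)⟩
    have := card_le_card hsub
    simp only [Nat.card_Ico] at this
    omega
  · intro hPt
    have hsub : Ico a (t + 1) ⊆ {s ∈ Ico a b | P s} := fun s hs => by
      simp only [mem_filter, mem_Ico] at hs ⊢
      exact ⟨⟨hs.1, by omega⟩, hdown s t hs.1 (by omega) htb hPt⟩
    have := card_le_card hsub
    simp only [Nat.card_Ico] at this
    omega

theorem sub_card_filter_Ico_le_iff {Q : ℕ → Prop} [DecidablePred Q] {a b t : ℕ}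
    (hup : ∀ s t, a ≤ s → s ≤ t → t < b → Q s → Q t) (hat : a ≤ t) (htb : t < b) :
    b - #{s ∈ Ico a b | Q s} ≤ t ↔ Q t := by
  have hnot := lt_add_card_filter_Ico_iff (P := fun s => ¬ Q s)
    (fun s t has hst htb hnt hs => hnt (hup s t has hst htb hs)) hat htb
  have hcard : #{s ∈ Ico a b | Q s} + #{s ∈ Ico a b | ¬ Q s} = b - a := by
    rw [card_filter_add_card_filter_not, Nat.card_Ico]
  rw [← not_iff_not, ← hnot]
  omega

theorem sum_eq_card_pos_sub_card_neg {ι : Type*} (s : Finset ι) {g : ι → ℤ}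
    (hg : ∀ x ∈ s, |g x| ≤ 1) :
    ∑ x ∈ s, g x = #{x ∈ s | 0 < g x} - #{x ∈ s | g x < 0} := by
  have hsign : ∀ x ∈ s, g x = (if 0 < g x then 1 else 0) - (if g x < 0 then 1 else 0) := by
    intro x hx
    have := abs_le.mp (hg x hx)
    split_ifs <;> omega
  rw [sum_congr rfl hsign, sum_sub_distrib, sum_boole, sum_boole]

theorem rVec_eq_one_iff {n l t : ℕ} (ht : 0 < t) : rVec n l t = 1 ↔ t ≤ l := by
  unfold rVec
  split_ifs <;> norm_num <;> omega

theorem rVec_eq_neg_one_iff {n l t : ℕ} (ht : 0 < t) (hl : 2 * l < n) :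
    rVec n l t = -1 ↔ n - l ≤ t := by
  unfold rVec
  split_ifs <;> norm_num <;> omega

theorem exists_eq_rVec_of_antitoneOn {n : ℕ} (hn : 2 ≤ n) {g : ℕ → ℤ}
    (hanti : AntitoneOn g (Set.Icc 1 (n - 1))) (hg1 : g 1 = 1) (hgn : g (n - 1) = -1)
    (hsum : ∑ t ∈ Ico 1 n, g t = 0) :
    ∃ l, 2 * l < n ∧ ∀ t ∈ Ico 1 n, (g t : ℂ) = rVec n l t := by
  have hmem : ∀ {t}, t ∈ Ico 1 n → t ∈ Set.Icc 1 (n - 1) := fun ht => by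
    simp only [mem_Ico] at ht; exact ⟨ht.1, by omega⟩
  have hbound : ∀ t ∈ Ico 1 n, |g t| ≤ 1 := fun t ht => by
    have := hanti ⟨le_rfl, by omega⟩ (hmem ht) (hmem ht).1
    have := hanti (hmem ht) ⟨by omega, le_rfl⟩ (hmem ht).2
    exact abs_le.mpr ⟨by omega, by omega⟩
  have hpos : ∀ t ∈ Ico 1 n, t < 1 + #{s ∈ Ico 1 n | 0 < g s} ↔ 0 < g t := fun t ht =>
    lt_add_card_filter_Ico_iff (fun s u hs hsu hu hgu =>
      (hanti ⟨hs, by omega⟩ ⟨by omega, by omega⟩ hsu).trans_lt' hgu)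
      (mem_Ico.mp ht).1 (mem_Ico.mp ht).2
  have hneg : ∀ t ∈ Ico 1 n, n - #{s ∈ Ico 1 n | g s < 0} ≤ t ↔ g t < 0 := fun t ht =>
    sub_card_filter_Ico_le_iff (fun s u hs hsu hu hgs =>
      (hanti ⟨hs, by omega⟩ ⟨by omega, by omega⟩ hsu).trans_lt hgs)
      (mem_Ico.mp ht).1 (mem_Ico.mp ht).2
  have hcard : #{s ∈ Ico 1 n | 0 < g s} = #{s ∈ Ico 1 n | g s < 0} := by
    rw [sum_eq_card_pos_sub_card_neg _ hbound] at hsum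
    omega
  set l := #{s ∈ Ico 1 n | 0 < g s}
  rw [← hcard] at hneg
  have hl : 2 * l < n := by
    have h1l := (hpos 1 (by simp; omega)).mpr (by omega)
    have hln : l < n := by
      have := card_filter_le (Ico 1 n) (fun s => 0 < g s)
      simp only [Nat.card_Ico] at this
      omega
    by_contra hle
    have := (hpos l (by simp; omega)).mp (by omega)
    have := (hneg l (by simp; omega)).mp (by omega)
    omega
  refine ⟨l, hl, fun t ht => ?_⟩
  have := abs_le.mp (hbound t ht)
  have := hpos t ht
  have := hneg t ht
  rw [rVec, if_neg (by simp at ht; omega)]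
  split_ifs <;> norm_cast <;> omega

theorem exists_eq_rVec_of_nat_steps {n : ℕ} (hn : 2 ≤ n) {f : ℕ → ℂ} (h1 : f 1 = 1)
    (hlast : f (n - 1) = -1) (hstep : ∀ t ∈ Set.Ico 1 (n - 1), ∃ m : ℕ, f t = f (t + 1) + m)
    (hsum : ∑ t ∈ Ico 1 n, f t = 0) :
    ∃ l, 2 * l < n ∧ ∀ t ∈ Ico 1 n, f t = rVec n l t := by
  obtain ⟨g, hanti, hfg⟩ :=
    exists_int_antitoneOn_of_nat_steps (z := 1) (by simpa using h1) hstep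
  have hfg' : ∀ t ∈ Ico 1 n, f t = g t := fun t ht => by
    simp only [mem_Ico] at ht; exact hfg t ⟨ht.1, by omega⟩
  have hg1 : g 1 = 1 := by exact_mod_cast (hfg 1 ⟨le_rfl, by omega⟩).symm.trans h1
  have hgn : g (n - 1) = -1 := by
    exact_mod_cast (hfg (n - 1) ⟨by omega, le_rfl⟩).symm.trans hlast
  have hgsum : ∑ t ∈ Ico 1 n, g t = 0 := by
    rw [sum_congr rfl hfg'] at hsum
    exact_mod_cast hsum
  obtain ⟨l, hl, hgl⟩ := exists_eq_rVec_of_antitoneOn hn hanti hg1 hgn hgsum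
  exact ⟨l, hl, fun t ht => (hfg' t ht).trans (hgl t ht)⟩

namespace Fin

theorem val_sub_eq_mod {n : ℕ} (i j : Fin n) : (j - i).val = (j.val + n - i.val) % n := by
  rw [Fin.val_sub]
  congr 1
  omega

open scoped Fin.CommRing

variable {n : ℕ} [NeZero n]

theorem mk_add_one_mod (i : Fin n) :
    (⟨(i.val + 1) % n, Nat.mod_lt _ (NeZero.pos n)⟩ : Fin n) = i + 1 :=
  Fin.ext (by simp [Fin.val_add, Nat.add_mod_mod])

theorem ne_add_natCast (i : Fin n) {t : ℕ} (h0 : 0 < t) (ht : t < n) : i ≠ i + (t : Fin n) := by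
  rw [ne_eq, left_eq_add, Fin.natCast_eq_zero]
  exact fun hdvd => absurd (Nat.le_of_dvd h0 hdvd) (by omega)

theorem add_natCast_add_natCast_eq_self (i : Fin n) {s t : ℕ} (h : s + t = n) :
    i + (s : Fin n) + (t : Fin n) = i := by
  rw [add_assoc, ← Nat.cast_add, h, Fin.natCast_self, add_zero]

theorem sum_univ_eq_sum_range_add {M : Type*} [AddCommMonoid M] (F : Fin n → M) (i : Fin n) :
    ∑ j, F j = ∑ t ∈ Finset.range n, F (i + (t : Fin n)) := by
  rw [← Fin.sum_univ_eq_sum_range (fun t => F (i + (t : Fin n)))]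
  simpa using (Equiv.sum_comp (Equiv.addLeft i) F).symm

end Fin

section Rows

open scoped Fin.CommRing

variable {n : ℕ} [NeZero n] {B : Matrix (Fin n) (Fin n) ℂ}

theorem exists_row_eq_row_succ_add_nat (hskew : ∀ i j, B j i = -B i j)
    (hsm : ∀ i, IsSmoothable B i (i + 1)) (hone : ∀ i, B i (i + 1) = 1) (i : Fin n) {t : ℕ}
    (ht : t ∈ Set.Ico 1 (n - 1)) :
    ∃ m : ℕ, B i (i + (t : Fin n)) = B i (i + ((t + 1 : ℕ) : Fin n)) + m := by
  obtain ⟨ht1, htn⟩ := ht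
  have hsucc : i + (t : Fin n) + 1 = i + ((t + 1 : ℕ) : Fin n) := by push_cast; ring
  obtain ⟨m, hm⟩ := (hsm (i + (t : Fin n))).2 i (Fin.ne_add_natCast i (by omega) (by omega))
    (hsucc ▸ Fin.ne_add_natCast i (by omega) (by omega))
  rw [hone, div_one, hsucc, hskew] at hm
  exact ⟨m, by linear_combination hm⟩

theorem row_pred_eq_neg_one (hskew : ∀ i j, B j i = -B i j) (hone : ∀ i, B i (i + 1) = 1)
    (i : Fin n) : B i (i + ((n - 1 : ℕ) : Fin n)) = -1 := by
  have hwrap : i + ((n - 1 : ℕ) : Fin n) + 1 = i := by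
    simpa using Fin.add_natCast_add_natCast_eq_self i (Nat.sub_add_cancel NeZero.one_le)
  have h := hone (i + ((n - 1 : ℕ) : Fin n))
  rw [hwrap] at h
  rw [hskew, h]

theorem sum_Ico_row_eq_zero (hskew : ∀ i j, B j i = -B i j) (hrow : ∀ i, ∑ j, B i j = 0)
    (i : Fin n) : ∑ t ∈ Finset.Ico 1 n, B i (i + (t : Fin n)) = 0 := by
  have h := hrow i
  rw [Fin.sum_univ_eq_sum_range_add _ i, Finset.range_eq_Ico,
    Finset.sum_eq_sum_Ico_succ_bot (NeZero.pos n)] at h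
  simpa [self_eq_neg.mp (hskew i i)] using h

theorem exists_rows_eq_rVec (hn : 2 ≤ n) (hskew : ∀ i j, B j i = -B i j)
    (hrow : ∀ i, ∑ j, B i j = 0) (hsm : ∀ i, IsSmoothable B i (i + 1))
    (hone : ∀ i, B i (i + 1) = 1) :
    ∃ l : Fin n → ℕ, (∀ i, 2 * l i < n) ∧
      ∀ i (t : ℕ), t < n → B i (i + (t : Fin n)) = rVec n (l i) t := by
  have hrow_i : ∀ i, ∃ l, 2 * l < n ∧ ∀ t < n, B i (i + (t : Fin n)) = rVec n l t := by
    intro i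
    obtain ⟨l, hl, hrv⟩ := exists_eq_rVec_of_nat_steps hn (f := fun t => B i (i + (t : Fin n)))
      (by simpa using hone i) (row_pred_eq_neg_one hskew hone i)
      (fun _ => exists_row_eq_row_succ_add_nat hskew hsm hone i) (sum_Ico_row_eq_zero hskew hrow i)
    refine ⟨l, hl, fun t ht => ?_⟩
    rcases Nat.eq_zero_or_pos t with rfl | ht0
    · simp [rVec, self_eq_neg.mp (hskew i i)]
    · exact hrv t (Finset.mem_Ico.mpr ⟨ht0, ht⟩)
  choose l hl using hrow_i
  exact ⟨l, fun i => (hl i).1, fun i => (hl i).2⟩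

theorem le_iff_le_add_of_rows_eq_rVec (hskew : ∀ i j, B j i = -B i j) {l : Fin n → ℕ}
    (hl : ∀ i, 2 * l i < n)
    (hrows : ∀ i (t : ℕ), t < n → B i (i + (t : Fin n)) = rVec n (l i) t)
    (i : Fin n) {t : ℕ} (ht : t < n) : t ≤ l i ↔ t ≤ l (i + (t : Fin n)) := by
  rcases Nat.eq_zero_or_pos t with rfl | ht0
  · simp
  have hback := hrows (i + (t : Fin n)) (n - t) (by omega)
  rw [Fin.add_natCast_add_natCast_eq_self i (Nat.add_sub_cancel' ht.le), hskew, hrows i t ht,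
    neg_eq_iff_eq_neg, eq_comm] at hback
  rw [← rVec_eq_one_iff ht0, ← hback, neg_eq_iff_eq_neg, rVec_eq_neg_one_iff (by omega) (hl _)]
  omega

end Rows

section Periodicity

open scoped Fin.CommRing

variable {n : ℕ} [NeZero n] {l : Fin n → ℕ}
  (hP : ∀ i (t : ℕ), t < n → (t ≤ l i ↔ t ≤ l (i + (t : Fin n))))
include hP

theorem periodic_le_of_le_iff {t : ℕ} (ht : t < n) :
    Function.Periodic (fun i => t ≤ l i) (t : Fin n) :=
  fun i => propext (hP i t ht).symm

theorem sub_one_le_of_le_iff {k : ℕ} (hkn : k < n) {i₀ : Fin n} (hi₀ : k ≤ l i₀)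
    (j : Fin n) : k - 1 ≤ l j := by
  obtain _ | k := k
  · exact Nat.zero_le _
  set m := (j - i₀).val
  have hj : j = i₀ + (m : Fin n) * ((k + 1 : ℕ) : Fin n) + (m : Fin n) * -(k : Fin n) := by
    simp only [m, Fin.cast_val_eq_self]
    push_cast
    ring
  have h1 : k + 1 ≤ l (i₀ + (m : Fin n) * ((k + 1 : ℕ) : Fin n)) :=
    (iff_of_eq ((periodic_le_of_le_iff hP hkn).nat_mul m i₀)).mpr hi₀
  rw [hj]
  exact (iff_of_eq ((periodic_le_of_le_iff hP (t := k) (by omega)).neg.nat_mul m _)).mpr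
    (by omega)

theorem periodic_gcd_of_le_iff {k : ℕ} (hkn : k < n) (hmax : ∀ i, l i ≤ k)
    (hmin : ∀ i, k - 1 ≤ l i) : Function.Periodic l (Nat.gcd n k : Fin n) := by
  have hd : (Nat.gcd n k : Fin n) = (Nat.gcdB n k : Fin n) * (k : Fin n) := by
    have h := congrArg (Int.cast : ℤ → Fin n) (Nat.gcd_eq_gcd_ab n k)
    push_cast at h
    rw [h, Fin.natCast_self]
    ring
  intro i
  have h := iff_of_eq ((periodic_le_of_le_iff hP hkn).int_mul (Nat.gcdB n k) i)
  rw [hd]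
  have := hmax i
  have := hmax (i + (Nat.gcdB n k : Fin n) * (k : Fin n))
  have := hmin i
  have := hmin (i + (Nat.gcdB n k : Fin n) * (k : Fin n))
  omega

end Periodicity

section Classification

open scoped Fin.CommRing

variable {n : ℕ} [NeZero n] {B : Matrix (Fin n) (Fin n) ℂ}

theorem eq_CnkI_of_rows {l : Fin n → ℕ} {k : ℕ}
    (hrows : ∀ i (t : ℕ), t < n → B i (i + (t : Fin n)) = rVec n (l i) t)
    (hper : Function.Periodic l (Nat.gcd n k : Fin n)) (hmax : ∀ i, l i ≤ k) :
    B = CnkI n k (fun s => k - l (s : Fin n)) := by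
  ext i j
  have hmod : l ((i.val % Nat.gcd n k : ℕ) : Fin n) = l i := by
    have := hper.nat_mul (i.val / Nat.gcd n k) ((i.val % Nat.gcd n k : ℕ) : Fin n)
    rw [← this, ← Nat.cast_mul, ← Nat.cast_add, Nat.mod_add_div', Fin.cast_val_eq_self]
  have hj : j = i + ((j - i).val : Fin n) := by simp
  rw [CnkI, Matrix.of_apply, hmod, Nat.sub_sub_self (hmax i), ← Fin.val_sub_eq_mod, hj,
    hrows i _ (j - i).isLt]
  simp

theorem exists_eq_CnkI (hn : 2 ≤ n) (hskew : ∀ i j, B j i = -B i j)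
    (hrow : ∀ i, ∑ j, B i j = 0) (hsm : ∀ i, IsSmoothable B i (i + 1))
    (hone : ∀ i, B i (i + 1) = 1) :
    ∃ (k : ℕ) (I : ℕ → ℕ), 1 ≤ k ∧ 2 * k < n ∧ (∀ s < Nat.gcd n k, I s ≤ 1) ∧
      B = CnkI n k I := by
  obtain ⟨l, hl, hrows⟩ := exists_rows_eq_rVec hn hskew hrow hsm hone
  have hP := le_iff_le_add_of_rows_eq_rVec hskew hl hrows
  obtain ⟨i₀, -, hi₀⟩ := Finset.exists_mem_eq_sup Finset.univ Finset.univ_nonempty l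
  set k := Finset.univ.sup l
  have hmax : ∀ i, l i ≤ k := fun i => Finset.le_sup (Finset.mem_univ i)
  have hk1 : 1 ≤ k := by
    have h := hrows i₀ 1 (by omega)
    rw [Nat.cast_one, hone, eq_comm, rVec_eq_one_iff one_pos] at h
    omega
  have hkn : 2 * k < n := hi₀ ▸ hl i₀
  have hmin := sub_one_le_of_le_iff hP (by omega) hi₀.le
  refine ⟨k, fun s => k - l (s : Fin n), hk1, hkn,
    fun s _ => show k - l s ≤ 1 by have := hmin s; omega,
    eq_CnkI_of_rows hrows (periodic_gcd_of_le_iff hP (by omega) hmax hmin) hmax⟩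

end Classification

/-- **Case 1 of Theorem C.** If `B` is skew-symmetric with zero
row sums, every edge `{i, (i+1) mod n}` is smoothable for `B`, and
`b_{i,(i+1) mod n} = 1` for every `i`, then `B` is a simultaneous cyclic shift
of some `C_{n,k,I}`. -/
theorem smoothable_cycle_with_unit_biresidues_is_CnkI {n : ℕ} (hn : 3 ≤ n)
    (B : Matrix (Fin n) (Fin n) ℂ)
    (hskew : ∀ i j, B j i = -B i j) (hrow : ∀ i, ∑ j, B i j = 0)
    (hsm : ∀ i : Fin n,
      IsSmoothable B i ⟨(i.val + 1) % n, Nat.mod_lt _ (by omega)⟩)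
    (hone : ∀ i : Fin n, B i ⟨(i.val + 1) % n, Nat.mod_lt _ (by omega)⟩ = 1) :
    ∃ (k : ℕ) (I : ℕ → ℕ) (c : ℕ),
      1 ≤ k ∧ 2 * k < n ∧ (∀ s < Nat.gcd n k, I s ≤ 1) ∧
      ∀ i j : Fin n, B i j =
        CnkI n k I ⟨(i.val + c) % n, Nat.mod_lt _ (by omega)⟩
          ⟨(j.val + c) % n, Nat.mod_lt _ (by omega)⟩ := by
  have : NeZero n := ⟨by omega⟩
  obtain ⟨k, I, hk1, hkn, hI, hB⟩ := exists_eq_CnkI (by omega) hskew hrow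
    (fun i => Fin.mk_add_one_mod i ▸ hsm i) (fun i => Fin.mk_add_one_mod i ▸ hone i)
  refine ⟨k, I, 0, hk1, hkn, hI, fun i j => ?_⟩
  simp [hB, Nat.mod_eq_of_lt]
end

section
/- Let n ≥ 3 and 1 ≤ k < n/2. Then the rank of the matrix C_{n,k} over ℂ is equal to the number of integers j with 0 ≤ j ≤ n−1 such that neither jk nor j(k+1) is divisible by n. -/
open BigOperators Matrix

/-- The matrix `C_{n,k}`, whose `i`-th row is `T^i(r(k))`;
equivalently `(C_{n,k})_{ij} = r(k)_{(j−i) mod n}`. -/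
def Cnk (n k : ℕ) : Matrix (Fin n) (Fin n) ℂ :=
  Matrix.of fun i j => rVec n k ((j.val + n - i.val) % n)

/-!
`C_{n,k}` is the transpose of a circulant matrix, so the Vandermonde matrix of the powers of a
primitive `n`-th root of unity `ω` diagonalises it, with eigenvalues `λ_j = ∑_m r(k)_m ζ^m` at
`ζ = ω^j`. Summing the two geometric progressions in `λ_j` gives
`λ_j (ζ - 1) ζ^k = (ζ^k - 1)(ζ^(k+1) - 1)`, and `λ_0 = k - k = 0`, so `λ_j = 0` exactly when
`ζ^k = 1` or `ζ^(k+1) = 1`, that is, when `n ∣ jk` or `n ∣ j(k+1)`.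
-/

open Finset

lemma pow_val_add_of_pow_eq_one {M : Type*} [Monoid M] {n : ℕ} {ω : M} (hω : ω ^ n = 1)
    (a b : Fin n) : ω ^ (a + b).val = ω ^ a.val * ω ^ b.val := by
  rw [Fin.val_add, ← pow_eq_pow_mod _ hω, pow_add]

namespace Matrix

variable {n : ℕ}

theorem circulant_transpose_mul_vandermonde [NeZero n] {R : Type*} [CommRing R] (v : Fin n → R)
    {ω : R} (hω : ω ^ n = 1) :
    (circulant v)ᵀ * vandermonde (fun i : Fin n => ω ^ i.val) =
      vandermonde (fun i : Fin n => ω ^ i.val) *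
        diagonal (fun j => ∑ m, v m * (ω ^ j.val) ^ m.val) := by
  ext i j
  rw [mul_diagonal, mul_apply]
  simp only [transpose_apply, circulant_apply, vandermonde_apply]
  rw [← Equiv.sum_comp (Equiv.addRight i), mul_comm, sum_mul]
  refine sum_congr rfl fun s _ => ?_
  simp only [Equiv.coe_addRight, add_sub_cancel_right, pow_val_add_of_pow_eq_one hω, mul_pow]
  rw [pow_right_comm ω s.val, pow_right_comm ω i.val]
  ring

theorem isUnit_det_vandermonde_pow {K : Type*} [Field K] {ω : K} (hω : IsPrimitiveRoot ω n) :
    IsUnit (vandermonde (fun i : Fin n => ω ^ i.val)).det :=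
  isUnit_iff_ne_zero.mpr <| det_vandermonde_ne_zero_iff.mpr fun a b h =>
    Fin.ext (hω.pow_inj a.isLt b.isLt h)

theorem rank_circulant_eq_card [NeZero n] {K : Type*} [Field K] [DecidableEq K] (v : Fin n → K)
    {ω : K} (hω : IsPrimitiveRoot ω n) :
    (circulant v).rank = #{j : Fin n | ∑ m, v m * (ω ^ j.val) ^ m.val ≠ 0} := by
  have hF := isUnit_det_vandermonde_pow hω
  rw [← rank_transpose, ← rank_mul_eq_left_of_isUnit_det _ _ hF,
    circulant_transpose_mul_vandermonde v hω.pow_eq_one, rank_mul_eq_right_of_isUnit_det _ _ hF,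
    rank_diagonal, Fintype.card_subtype]

end Matrix

section rVec

variable {n k : ℕ}

lemma Cnk_eq_circulant_transpose [NeZero n] :
    Cnk n k = (circulant fun m : Fin n => rVec n k m.val)ᵀ := by
  ext i j
  simp only [Cnk, of_apply, transpose_apply, circulant_apply, Fin.val_sub]
  congr 2
  omega

lemma sum_rVec_mul_pow (hk : 2 * k < n) (ζ : ℂ) :
    ∑ m ∈ range n, rVec n k m * ζ ^ m =
      ∑ m ∈ Ico 1 (k + 1), ζ ^ m - ∑ m ∈ Ico (n - k) n, ζ ^ m := by
  have hterm : ∀ m ∈ range n, rVec n k m * ζ ^ m =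
      (if m ∈ Ico 1 (k + 1) then ζ ^ m else 0) - (if m ∈ Ico (n - k) n then ζ ^ m else 0) := by
    intro m hm
    simp only [mem_range] at hm
    simp only [rVec, mem_Ico]
    split_ifs <;> first | omega | ring
  rw [sum_congr rfl hterm, sum_sub_distrib, sum_ite_mem, sum_ite_mem, range_eq_Ico,
    inter_eq_right.mpr (Ico_subset_Ico (by omega) (by omega)),
    inter_eq_right.mpr (Ico_subset_Ico (by omega) le_rfl)]

lemma sum_rVec_mul_pow_mul (hk : 2 * k < n) {ζ : ℂ} (hζ : ζ ^ n = 1) :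
    (∑ m ∈ range n, rVec n k m * ζ ^ m) * ((ζ - 1) * ζ ^ k) =
      (ζ ^ k - 1) * (ζ ^ (k + 1) - 1) := by
  have hlow := geom_sum_Ico_mul ζ (by omega : 1 ≤ k + 1)
  have hhigh := geom_sum_Ico_mul ζ (by omega : n - k ≤ n)
  have hinv : ζ ^ (n - k) * ζ ^ k = 1 := by rw [← pow_add, Nat.sub_add_cancel (by omega), hζ]
  rw [sum_rVec_mul_pow hk, ← mul_assoc, sub_mul, hlow, hhigh, hζ]
  linear_combination hinv

lemma sum_rVec_mul_pow_eq_zero_iff (hk : 2 * k < n) {ζ : ℂ} (hζ : ζ ^ n = 1) :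
    ∑ m ∈ range n, rVec n k m * ζ ^ m = 0 ↔ ζ ^ k = 1 ∨ ζ ^ (k + 1) = 1 := by
  by_cases h1 : ζ = 1
  · subst h1
    rw [sum_rVec_mul_pow hk]
    simp only [one_pow, true_or, iff_true, sum_const, Nat.card_Ico, nsmul_eq_mul, mul_one]
    rw [show k + 1 - 1 = n - (n - k) by omega, sub_self]
  · have hζ0 : ζ ≠ 0 := by
      rintro rfl
      simp [zero_pow (by omega : n ≠ 0)] at hζ
    rw [← mul_eq_zero_iff_right (mul_ne_zero (sub_ne_zero.mpr h1) (pow_ne_zero k hζ0)),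
      sum_rVec_mul_pow_mul hk hζ, mul_eq_zero, sub_eq_zero, sub_eq_zero]

lemma sum_rVec_mul_pow_ne_zero_iff (hk : 2 * k < n) {ω : ℂ} (hω : IsPrimitiveRoot ω n) (j : ℕ) :
    ∑ m : Fin n, rVec n k m * (ω ^ j) ^ m.val ≠ 0 ↔ ¬ n ∣ j * k ∧ ¬ n ∣ j * (k + 1) := by
  have hζ : (ω ^ j) ^ n = 1 := by rw [pow_right_comm, hω.pow_eq_one, one_pow]
  rw [Fin.sum_univ_eq_sum_range (fun m => rVec n k m * (ω ^ j) ^ m), ne_eq,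
    sum_rVec_mul_pow_eq_zero_iff hk hζ, ← pow_mul, ← pow_mul, hω.pow_eq_one_iff_dvd,
    hω.pow_eq_one_iff_dvd, not_or]

end rVec

theorem rank_Cnk_general (n k : ℕ) (hk2 : 2 * k < n) :
    (Cnk n k).rank =
      ((Finset.range n).filter (fun j => ¬ n ∣ j * k ∧ ¬ n ∣ j * (k + 1))).card := by
  have : NeZero n := ⟨by omega⟩
  have hω := Complex.isPrimitiveRoot_exp n (NeZero.ne n)
  rw [Cnk_eq_circulant_transpose, rank_transpose, rank_circulant_eq_card _ hω]
  simp only [sum_rVec_mul_pow_ne_zero_iff hk2 hω]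
  rw [card_filter, card_filter,
    Fin.sum_univ_eq_sum_range (fun j => if ¬ n ∣ j * k ∧ ¬ n ∣ j * (k + 1) then 1 else 0)]

/-- The rank of `C_{n,k}` over `ℂ` equals the number of
`j ∈ {0,…,n−1}` such that neither `jk` nor `j(k+1)` is divisible by `n`. -/
theorem rank_Cnk (n k : ℕ) (hn : 3 ≤ n) (hk1 : 1 ≤ k) (hk2 : 2 * k < n) :
    (Cnk n k).rank =
      ((Finset.range n).filter (fun j => ¬ n ∣ j * k ∧ ¬ n ∣ j * (k + 1))).card :=
  rank_Cnk_general n k hk2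
end

section
/- Let n and k be integers with 1 ≤ k < n and gcd(n, k+1) = 1. Then there exist unique positive integers n₁, n₂, k₁, k₂ such that n₁ + n₂ = n, k₁ + k₂ = k + 1, and n₁k₂ − n₂k₁ = 1. -/
/-!
Writing `n₂ = n - n₁` and `k₂ = k + 1 - k₁`, the condition `n₁k₂ − n₂k₁ = 1` becomes
`n₁(k + 1) = n k₁ + 1`. So `n₁` must be the inverse of `k + 1` modulo `n` taken in `[1, n)`,
which exists and is unique since `gcd(n, k + 1) = 1`, and then `k₁ = (n₁(k + 1) - 1) / n`.
-/

theorem natCast_mul_sub_mul_eq_one_iff {a b c d : ℕ} :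
    (a : ℤ) * d - b * c = 1 ↔ a * (c + d) = (a + b) * c + 1 := by
  zify
  constructor <;> intro h <;> linear_combination h

theorem exists_mul_eq_mul_add_one {n m : ℕ} (hn : 1 < n) (hm : 1 < m) (h : Nat.gcd n m = 1) :
    ∃ a c, 0 < a ∧ a < n ∧ 0 < c ∧ c < m ∧ a * m = n * c + 1 := by
  obtain ⟨a, han, hmod⟩ := Nat.exists_mul_mod_eq_one_of_coprime (Nat.Coprime.symm h) hn
  have hac : a * m = n * (m * a / n) + 1 := by
    rw [mul_comm a m, ← hmod, Nat.div_add_mod]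
  refine ⟨a, m * a / n, Nat.pos_of_ne_zero ?_, han, Nat.pos_of_ne_zero ?_, ?_, hac⟩
  · rintro rfl
    simp at hmod
  · intro hc
    rw [hc, mul_zero, zero_add, mul_eq_one] at hac
    omega
  · refine Nat.lt_of_mul_lt_mul_left (a := n) ?_
    calc n * (m * a / n) < a * m := by omega
      _ ≤ n * m := Nat.mul_le_mul_right m han.le

theorem eq_of_mul_eq_mul_add_one {n m a a' c c' : ℕ} (h : Nat.gcd n m = 1) (ha : a < n)
    (ha' : a' < n) (hac : a * m = n * c + 1) (hac' : a' * m = n * c' + 1) : a = a' ∧ c = c' := by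
  have hmod : a * m ≡ a' * m [MOD n] := by
    rw [hac, hac']
    simp [Nat.ModEq]
  have haa' : a = a' := by
    have := Nat.ModEq.cancel_right_of_coprime h hmod
    rwa [Nat.ModEq, Nat.mod_eq_of_lt ha, Nat.mod_eq_of_lt ha'] at this
  subst haa'
  have hnc : n * c = n * c' := by omega
  exact ⟨rfl, Nat.eq_of_mul_eq_mul_left (by omega) hnc⟩

/-- **Lemma on continued fractions.** For `1 ≤ k < n` with
`gcd(n, k+1) = 1`, there exist unique positive integers `n₁, n₂, k₁, k₂` with
`n₁ + n₂ = n`, `k₁ + k₂ = k + 1` and `n₁k₂ − n₂k₁ = 1`. -/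
theorem unique_splitting (n k : ℕ) (hk1 : 1 ≤ k) (hk2 : k < n)
    (hgcd : Nat.gcd n (k + 1) = 1) :
    ∃! q : ℕ × ℕ × ℕ × ℕ,
      0 < q.1 ∧ 0 < q.2.1 ∧ 0 < q.2.2.1 ∧ 0 < q.2.2.2 ∧
      q.1 + q.2.1 = n ∧ q.2.2.1 + q.2.2.2 = k + 1 ∧
      (q.1 : ℤ) * q.2.2.2 - (q.2.1 : ℤ) * q.2.2.1 = 1 := by
  obtain ⟨a, c, ha, han, hc, hck, hac⟩ := exists_mul_eq_mul_add_one (by omega) (by omega) hgcd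
  refine ⟨(a, n - a, c, k + 1 - c), ⟨ha, Nat.sub_pos_of_lt han, hc, Nat.sub_pos_of_lt hck,
    Nat.add_sub_cancel' han.le, Nat.add_sub_cancel' hck.le, ?_⟩, ?_⟩
  · rwa [natCast_mul_sub_mul_eq_one_iff, Nat.add_sub_cancel' han.le, Nat.add_sub_cancel' hck.le]
  · rintro ⟨a', b', c', d'⟩ ⟨-, hb', -, -, hn, hk, hdet⟩
    dsimp only at hb' hn hk hdet
    rw [natCast_mul_sub_mul_eq_one_iff, hn, hk] at hdet
    obtain ⟨rfl, rfl⟩ := eq_of_mul_eq_mul_add_one hgcd (by omega) han hdet hac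
    simp only [Prod.mk.injEq, true_and]
    omega
end

section
/- Fix an integer n ≥ 2. For an integer α let ᾱ denote its residue in {0,…,n−1}, let g(α) = ᾱ(n−ᾱ)/2 ∈ ℚ, and for integers α, β let h(α,β) = g(α) + g(β) − g(α+β). Then for all integers α, β not divisible by n: (1) h(α,β) is a positive integer; (2) if ᾱ + β̄ ≤ n then h(α−1,β) < h(α,β); (3) if ᾱ + β̄ ≥ n then h(α+1,β) < h(α,β); (4) h(α,β) = 1 if and only if either ᾱ = β̄ = 1 or ᾱ = β̄ = n−1. -/
/-! Writing `x = ᾱ`, `y = β̄`, one has `h(α,β) = x y` when `x + y ≤ n`, since then `α + β` has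
residue `x + y` or `0`. As `g(-α) = g(α)`, also `h(-α,-β) = h(α,β)`, and since `-α` has residue
`n - x` when `n ∤ α`, this gives `h(α,β) = (n - x)(n - y)` when `x + y ≥ n`. All four claims
are then elementary facts about these two products; claim (3) is claim (2) for `(-α,-β)`. -/

open BigOperators Matrix

/-- `resd n a` is the residue of the integer `a` in `{0,…,n−1}`. -/
def resd (n : ℕ) (a : ℤ) : ℤ := a % (n : ℤ)

/-- `g(α) = ᾱ(n−ᾱ)/2 ∈ ℚ`. -/
def gfun (n : ℕ) (a : ℤ) : ℚ := ((resd n a * ((n : ℤ) - resd n a) : ℤ) : ℚ) / 2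

/-- `h(α,β) = g(α) + g(β) − g(α+β)`. -/
def hfun (n : ℕ) (a b : ℤ) : ℚ := gfun n a + gfun n b - gfun n (a + b)

variable {n : ℕ} {a b : ℤ}

lemma resd_nonneg (hn : 0 < n) (a : ℤ) : 0 ≤ resd n a :=
  Int.emod_nonneg a (by omega)

lemma resd_lt (hn : 0 < n) (a : ℤ) : resd n a < n :=
  Int.emod_lt_of_pos a (by omega)

lemma resd_pos (hn : 0 < n) (ha : ¬ (n : ℤ) ∣ a) : 0 < resd n a :=
  lt_of_le_of_ne (resd_nonneg hn a) fun h => ha (Int.dvd_of_emod_eq_zero h.symm)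

lemma not_dvd_of_le_resd_add (hn : 0 < n) (h : (n : ℤ) ≤ resd n a + resd n b) :
    ¬ (n : ℤ) ∣ a ∧ ¬ (n : ℤ) ∣ b := by
  have := resd_lt hn a
  have := resd_lt hn b
  constructor <;> intro hdvd <;> simp only [resd, Int.emod_eq_zero_of_dvd hdvd] at * <;> omega

lemma resd_neg (ha : ¬ (n : ℤ) ∣ a) : resd n (-a) = n - resd n a := by
  simp [resd, Int.neg_emod, ha]

lemma resd_neg_add_resd_neg_le (hn : 0 < n) (h : (n : ℤ) ≤ resd n a + resd n b) :
    resd n (-a) + resd n (-b) ≤ n := by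
  obtain ⟨ha, hb⟩ := not_dvd_of_le_resd_add hn h
  rw [resd_neg ha, resd_neg hb]
  linarith

lemma resd_sub_one (hn : 0 < n) (ha : 0 < resd n a) : resd n (a - 1) = resd n a - 1 := by
  have hdecomp : a - 1 = (resd n a - 1) + n * (a / n) := by
    rw [resd]
    linarith [Int.emod_add_mul_ediv a n]
  rw [resd, hdecomp, Int.add_mul_emod_self_left]
  exact Int.emod_eq_of_lt (by linarith) (by linarith [resd_lt hn a])

lemma gfun_neg (n : ℕ) (a : ℤ) : gfun n (-a) = gfun n a := by
  unfold gfun resd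
  rw [Int.neg_emod]
  split_ifs with ha
  · simp [Int.emod_eq_zero_of_dvd ha]
  · rw [Int.natAbs_natCast]
    push_cast
    ring

lemma hfun_neg (n : ℕ) (a b : ℤ) : hfun n (-a) (-b) = hfun n a b := by
  simp only [hfun, ← neg_add, gfun_neg]

lemma hfun_eq_of_resd_add_le (hn : 0 < n) (h : resd n a + resd n b ≤ n) :
    hfun n a b = ((resd n a * resd n b : ℤ) : ℚ) := by
  have hx := resd_nonneg hn a
  have hy := resd_nonneg hn b
  rcases h.lt_or_eq with h | h
  · have hs : resd n (a + b) = resd n a + resd n b := by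
      rw [resd, Int.add_emod]
      exact Int.emod_eq_of_lt (add_nonneg hx hy) h
    simp only [hfun, gfun, hs]
    push_cast
    ring
  · have hs : resd n (a + b) = 0 := by
      simp only [resd] at h ⊢
      simp [Int.add_emod, h]
    have hq : (n : ℚ) = resd n a + resd n b := by exact_mod_cast h.symm
    simp only [hfun, gfun, hs]
    push_cast
    linear_combination ((resd n a + resd n b : ℚ) / 2) * hq

lemma hfun_eq_of_le_resd_add (hn : 0 < n) (h : (n : ℤ) ≤ resd n a + resd n b) :
    hfun n a b = (((n - resd n a) * (n - resd n b) : ℤ) : ℚ) := by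
  obtain ⟨ha, hb⟩ := not_dvd_of_le_resd_add hn h
  rw [← hfun_neg, hfun_eq_of_resd_add_le hn (resd_neg_add_resd_neg_le hn h), resd_neg ha,
    resd_neg hb]

lemma hfun_pos (hn : 0 < n) (ha : ¬ (n : ℤ) ∣ a) (hb : ¬ (n : ℤ) ∣ b) :
    ∃ m : ℕ, 0 < m ∧ hfun n a b = m := by
  obtain ⟨k, hk, hfk⟩ : ∃ k : ℤ, 0 < k ∧ hfun n a b = k := by
    rcases le_total (resd n a + resd n b) n with h | h
    · exact ⟨_, mul_pos (resd_pos hn ha) (resd_pos hn hb), hfun_eq_of_resd_add_le hn h⟩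
    · exact ⟨_, mul_pos (sub_pos.mpr (resd_lt hn a)) (sub_pos.mpr (resd_lt hn b)),
        hfun_eq_of_le_resd_add hn h⟩
  lift k to ℕ using hk.le
  exact ⟨k, by exact_mod_cast hk, by exact_mod_cast hfk⟩

lemma hfun_sub_one_lt (hn : 0 < n) (ha : ¬ (n : ℤ) ∣ a) (hb : ¬ (n : ℤ) ∣ b)
    (h : resd n a + resd n b ≤ n) : hfun n (a - 1) b < hfun n a b := by
  have hx := resd_pos hn ha
  have hy := resd_pos hn hb
  have h' : resd n (a - 1) + resd n b ≤ n := by rw [resd_sub_one hn hx]; linarith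
  rw [hfun_eq_of_resd_add_le hn h, hfun_eq_of_resd_add_le hn h', resd_sub_one hn hx]
  exact_mod_cast (by nlinarith : (resd n a - 1) * resd n b < resd n a * resd n b)

lemma hfun_add_one_lt (hn : 0 < n) (h : (n : ℤ) ≤ resd n a + resd n b) :
    hfun n (a + 1) b < hfun n a b := by
  obtain ⟨ha, hb⟩ := not_dvd_of_le_resd_add hn h
  have := hfun_sub_one_lt hn (by rwa [dvd_neg]) (by rwa [dvd_neg])
    (resd_neg_add_resd_neg_le hn h)
  rwa [← neg_add', hfun_neg, hfun_neg] at this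

lemma hfun_eq_one_iff (hn : 0 < n) (ha : ¬ (n : ℤ) ∣ a) (hb : ¬ (n : ℤ) ∣ b) :
    hfun n a b = 1 ↔
      (resd n a = 1 ∧ resd n b = 1) ∨ (resd n a = n - 1 ∧ resd n b = n - 1) := by
  have := resd_pos hn ha
  have := resd_pos hn hb
  have := resd_lt hn a
  have := resd_lt hn b
  rcases le_total (resd n a + resd n b) n with h | h
  · rw [hfun_eq_of_resd_add_le hn h, Int.cast_eq_one, Int.mul_eq_one_iff_eq_one_or_neg_one]
    omega
  · rw [hfun_eq_of_le_resd_add hn h, Int.cast_eq_one, Int.mul_eq_one_iff_eq_one_or_neg_one]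
    omega

/-- For integers `α, β` not divisible by `n ≥ 2`:
(1) `h(α,β)` is a positive integer;
(2) if `ᾱ + β̄ ≤ n` then `h(α−1,β) < h(α,β)`;
(3) if `ᾱ + β̄ ≥ n` then `h(α+1,β) < h(α,β)`;
(4) `h(α,β) = 1` iff `ᾱ = β̄ = 1` or `ᾱ = β̄ = n−1`. -/
theorem hfun_properties (n : ℕ) (hn : 2 ≤ n) (a b : ℤ)
    (ha : ¬ (n : ℤ) ∣ a) (hb : ¬ (n : ℤ) ∣ b) :
    (∃ m : ℕ, 0 < m ∧ hfun n a b = (m : ℚ)) ∧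
    (resd n a + resd n b ≤ (n : ℤ) → hfun n (a - 1) b < hfun n a b) ∧
    ((n : ℤ) ≤ resd n a + resd n b → hfun n (a + 1) b < hfun n a b) ∧
    (hfun n a b = 1 ↔
      (resd n a = 1 ∧ resd n b = 1) ∨
      (resd n a = (n : ℤ) - 1 ∧ resd n b = (n : ℤ) - 1)) := by
  have hpos : 0 < n := by omega
  exact ⟨hfun_pos hpos ha hb, hfun_sub_one_lt hpos ha hb, hfun_add_one_lt hpos,
    hfun_eq_one_iff hpos ha hb⟩
end

section
/- Let n ≥ 3 and 1 ≤ k < n with gcd(n,k) = 1 and gcd(n,k+1) = 1, and let k′ be the unique integer with 1 ≤ k′ < n and k·k′ ≡ 1 (mod n). Then for all integers i, j (indices of Π read modulo n): Π_{i+1,j} + Π_{i+k′,j} − Π_{i,j} − Π_{i+k′+1,j} equals n if i ≡ j (mod n), equals −n if j − i ≡ k′ + 1 (mod n), and equals 0 otherwise. -/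
open BigOperators Matrix

/-- The matrix `Π = Π_{n,k}` as a function of integer indices read modulo `n`:
`Π_{ij} = ((j−i) mod n) + ((k(j−i)) mod n) − n` for `i ≢ j (mod n)`, and
`Π_{ij} = 0` for `i ≡ j (mod n)`. -/
def PiZ (n k : ℕ) (i j : ℤ) : ℤ :=
  if (j - i) % (n : ℤ) = 0 then 0
  else (j - i) % (n : ℤ) + ((k : ℤ) * (j - i)) % (n : ℤ) - n

/-!
Write `F x = x % n` for the sawtooth. Since `(x - 1) % n + 1` is the representative of `x` in
`{1, …, n}`, the entry `Π_{ij}` is `F (x - 1) + F (k x) + 1 - n` with `x = j - i`, without the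
case distinction at `x ≡ 0`. The combination in the theorem is then a sum of two second
differences `F (y - 1) + F (y - b) - F y - F (y - b - 1)` of the sawtooth, one at `y = j - i - 1`
with `b = k'` and one at `y = k (j - i)` with `b = k` (because `k k' ≡ 1`). Such a second
difference is `n` when `n ∣ y`, `-n` when `n ∣ y - b`, and `0` otherwise; by coprimality of `k`
and `n` the terms `n ∣ j - i - 1` of the two differences cancel.
-/

lemma sub_emod_eq_ite (x : ℤ) {n c : ℤ} (hc : 0 ≤ c) (hcn : c ≤ n) :
    (x - c) % n = if c ≤ x % n then x % n - c else x % n - c + n := by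
  rcases hcn.lt_or_eq with hcn | rfl
  · have hn : 0 < n := by omega
    have h0 := Int.emod_nonneg x hn.ne'
    have hlt := Int.emod_lt_of_pos x hn
    rw [show x - c = (x % n - c) + n * (x / n) by rw [Int.emod_def]; ring,
      Int.add_mul_emod_self_left]
    split_ifs with h
    · exact Int.emod_eq_of_lt (by omega) (by omega)
    · rw [← Int.add_emod_right]
      exact Int.emod_eq_of_lt (by omega) (by omega)
  · rcases hc.lt_or_eq with hc | rfl
    · rw [Int.sub_emod_right, if_neg (Int.emod_lt_of_pos x hc).not_ge]
      ring
    · simp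

lemma emod_second_difference (x : ℤ) {n b : ℤ} (hb : 0 ≤ b) (hbn : b < n) :
    (x - 1) % n + (x - b) % n - x % n - (x - b - 1) % n =
      (if n ∣ x then n else 0) - if n ∣ x - b then n else 0 := by
  have hn : 0 < n := by omega
  have h0 := Int.emod_nonneg x hn.ne'
  have hlt := Int.emod_lt_of_pos x hn
  have hdvd : n ∣ x - b ↔ x % n = b := by
    rw [Int.dvd_iff_emod_eq_zero, sub_emod_eq_ite x hb hbn.le]
    split_ifs <;> omega
  simp only [hdvd, Int.dvd_iff_emod_eq_zero]
  rw [show x - b - 1 = x - (b + 1) by ring, sub_emod_eq_ite x (c := 1) (by omega) (by omega),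
    sub_emod_eq_ite x hb hbn.le, sub_emod_eq_ite x (c := b + 1) (by omega) (by omega)]
  split_ifs <;> omega

def piCirculant (n k x : ℤ) : ℤ :=
  (x - 1) % n + k * x % n + 1 - n

lemma PiZ_eq_piCirculant {n : ℕ} (hn : 0 < n) (k : ℕ) (i j : ℤ) :
    PiZ n k i j = piCirculant n k (j - i) := by
  have hn' : (0 : ℤ) < n := by exact_mod_cast hn
  have hnonneg := Int.emod_nonneg (j - i) hn'.ne'
  unfold PiZ piCirculant
  rw [sub_emod_eq_ite (j - i) zero_le_one (by omega)]
  by_cases h0 : (j - i) % n = 0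
  · have hk0 : k * (j - i) % n = 0 :=
      Int.emod_eq_zero_of_dvd (dvd_mul_of_dvd_right (Int.dvd_of_emod_eq_zero h0) _)
    simp [h0, hk0]
  · rw [if_neg h0, if_pos (by omega)]
    ring

lemma not_dvd_add_one_of_mul_modEq_one {n k k' : ℤ} (hn : ¬ IsUnit n)
    (hcop : IsCoprime n (k + 1)) (hinv : k * k' ≡ 1 [ZMOD n]) : ¬ n ∣ k' + 1 := by
  intro h
  have hk' : k' ≡ -1 [ZMOD n] := Int.modEq_iff_dvd.mpr (by simpa [dvd_sub_comm] using h)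
  have hk : n ∣ k + 1 := by
    simpa [sub_neg_eq_add, add_comm] using ((hk'.mul_left k).symm.trans hinv).dvd
  exact hn (hcop.isUnit_of_dvd' dvd_rfl hk)

lemma piCirculant_second_difference {n k k' : ℤ} (hk : 0 ≤ k) (hkn : k < n) (hk' : 0 ≤ k')
    (hk'n : k' < n) (hcop : IsCoprime n k) (hinv : k * k' ≡ 1 [ZMOD n]) (d : ℤ) :
    piCirculant n k (d - 1) + piCirculant n k (d - k') - piCirculant n k d
        - piCirculant n k (d - k' - 1) =
      (if n ∣ d then n else 0) - if n ∣ d - k' - 1 then n else 0 := by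
  have hdvd (y : ℤ) : n ∣ k * y ↔ n ∣ y := ⟨hcop.dvd_of_dvd_mul_left, (·.mul_left k)⟩
  have hF := emod_second_difference (d - 1) hk' hk'n
  have hG := emod_second_difference (k * d) hk hkn
  have e1 : k * (d - k') ≡ k * d - 1 [ZMOD n] := by
    simpa only [mul_sub] using hinv.sub_left (k * d)
  have e2 : k * (d - k' - 1) ≡ k * d - k - 1 [ZMOD n] := by
    convert (hinv.sub_left (k * d)).sub_right k using 1 <;> ring
  have hdvd' : n ∣ k * d - k ↔ n ∣ d - 1 := by rw [← hdvd (d - 1), mul_sub, mul_one]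
  simp only [hdvd, hdvd'] at hG
  simp only [show d - 1 - k' = d - k' - 1 by ring] at hF
  unfold piCirculant
  rw [e1, e2, show k * (d - 1) = k * d - k by ring]
  linear_combination hF + hG

theorem Pi_telescoping_general (n k k' : ℕ) (hn : 3 ≤ n) (hk2 : k < n)
    (h1 : Nat.gcd n k = 1) (h2 : Nat.gcd n (k + 1) = 1)
    (hk'2 : k' < n) (hk'3 : (k * k') % n = 1) :
    ∀ i j : ℤ,
      PiZ n k (i + 1) j + PiZ n k (i + k') j - PiZ n k i j
          - PiZ n k (i + k' + 1) j =
        if (i - j) % (n : ℤ) = 0 then (n : ℤ)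
        else if (j - i - (k' + 1)) % (n : ℤ) = 0 then -(n : ℤ)
        else 0 := by
  intro i j
  have hinv : (k : ℤ) * k' ≡ 1 [ZMOD n] := by
    have : k * k' ≡ 1 [MOD n] := by rw [Nat.ModEq, hk'3, Nat.mod_eq_of_lt (by omega)]
    exact_mod_cast Int.natCast_modEq_iff.mpr this
  have hk'n : ¬ (n : ℤ) ∣ k' + 1 :=
    not_dvd_add_one_of_mul_modEq_one (by rw [Int.isUnit_iff]; omega)
      (by exact_mod_cast Nat.isCoprime_iff_coprime.mpr h2) hinv
  simp only [PiZ_eq_piCirculant (by omega : 0 < n), show j - (i + 1) = j - i - 1 by ring,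
    show j - (i + k') = j - i - k' by ring, show j - (i + k' + 1) = j - i - k' - 1 by ring]
  rw [piCirculant_second_difference (by positivity) (by exact_mod_cast hk2) (by positivity)
    (by exact_mod_cast hk'2) (Nat.isCoprime_iff_coprime.mpr h1) hinv]
  simp only [← Int.dvd_iff_emod_eq_zero, dvd_sub_comm (b := i),
    show j - i - (k' + 1) = j - i - k' - 1 by ring]
  have hexcl : ¬ ((n : ℤ) ∣ j - i ∧ (n : ℤ) ∣ j - i - k' - 1) := fun ⟨h, h'⟩ =>
    hk'n (by rw [show (k' : ℤ) + 1 = j - i - (j - i - k' - 1) by ring]; exact dvd_sub h h')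
  split_ifs <;> simp_all

/-- For `gcd(n,k) = gcd(n,k+1) = 1` and `k′` the inverse of
`k` mod `n`, the combination `Π_{i+1,j} + Π_{i+k′,j} − Π_{i,j} − Π_{i+k′+1,j}`
equals `n` if `i ≡ j (mod n)`, `−n` if `j − i ≡ k′+1 (mod n)`, and `0` otherwise. -/
theorem Pi_telescoping (n k k' : ℕ) (hn : 3 ≤ n) (hk1 : 1 ≤ k) (hk2 : k < n)
    (h1 : Nat.gcd n k = 1) (h2 : Nat.gcd n (k + 1) = 1)
    (hk'1 : 1 ≤ k') (hk'2 : k' < n) (hk'3 : (k * k') % n = 1) :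
    ∀ i j : ℤ,
      PiZ n k (i + 1) j + PiZ n k (i + k') j - PiZ n k i j
          - PiZ n k (i + k' + 1) j =
        if (i - j) % (n : ℤ) = 0 then (n : ℤ)
        else if (j - i - (k' + 1)) % (n : ℤ) = 0 then -(n : ℤ)
        else 0 :=
  Pi_telescoping_general n k k' hn hk2 h1 h2 hk'2 hk'3
end

section
/- Let n ≥ 3 and 1 ≤ k < n with gcd(n,k) = 1. Then for all integers i, j with 1 ≤ i < j ≤ n−1, the quantity Π_{ij} − Π_{i0} − Π_{0j} equals 0 if ((k(j−i)) mod n) + ((ki) mod n) ≥ n, and equals −n if ((k(j−i)) mod n) + ((ki) mod n) < n. -/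
open BigOperators Matrix

/-! Write `c(a, b) = a % n + b % n - (a + b) % n ∈ {0, n}` for the carry of a sum modulo `n`.
Since `(-x) % n = n - x % n` whenever `n ∤ x`, off the diagonal and for `n ∤ k i` the two summands
of `Π` contribute one carry each: `Π_{ij} - Π_{i0} - Π_{0j} = c(j - i, i) + c(k (j - i), k i) - n`.
For `0 < i < j < n` the first carry vanishes, `n ∤ k i` by coprimality, and the second carry is `n`
exactly when `(k (j - i)) % n + (k i) % n ≥ n`. -/

theorem Int.emod_add_emod_sub_add_emod_eq_ite {n : ℤ} (hn : 0 < n) (a b : ℤ) :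
    a % n + b % n - (a + b) % n = if n ≤ a % n + b % n then n else 0 := by
  have ha := Int.emod_nonneg a hn.ne'
  have hb := Int.emod_nonneg b hn.ne'
  have ha' := Int.emod_lt_of_pos a hn
  have hb' := Int.emod_lt_of_pos b hn
  rw [Int.add_emod a b]
  split_ifs with h
  · have hred : (a % n + b % n - n) % n = a % n + b % n - n :=
      Int.emod_eq_of_lt (by omega) (by omega)
    rw [← Int.sub_emod_right (a % n + b % n) n, hred]
    ring
  · have hred : (a % n + b % n) % n = a % n + b % n := Int.emod_eq_of_lt (by omega) (by omega)
    rw [hred]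
    ring

theorem Int.neg_emod_of_not_dvd {n : ℕ} {a : ℤ} (h : ¬ (n : ℤ) ∣ a) :
    -a % n = n - a % n := by
  rw [Int.neg_emod, if_neg h, Int.natAbs_natCast]

theorem Int.not_dvd_of_pos_of_lt {m n : ℤ} (h0 : 0 < m) (hlt : m < n) : ¬ n ∣ m :=
  fun h => h0.ne' (Int.eq_zero_of_dvd_of_nonneg_of_lt h0.le hlt h)

theorem PiZ_of_not_dvd {n k : ℕ} {i j : ℤ} (h : ¬ (n : ℤ) ∣ j - i) :
    PiZ n k i j = (j - i) % n + (k * (j - i)) % n - n :=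
  if_neg (mt Int.dvd_iff_emod_eq_zero.mpr h)

theorem PiZ_sub_PiZ_sub_PiZ {n k : ℕ} {i j : ℤ} (hi : ¬ (n : ℤ) ∣ i) (hj : ¬ (n : ℤ) ∣ j)
    (hji : ¬ (n : ℤ) ∣ j - i) (hki : ¬ (n : ℤ) ∣ k * i) :
    PiZ n k i j - PiZ n k i 0 - PiZ n k 0 j =
      ((j - i) % n + i % n - j % n) + ((k * (j - i)) % n + (k * i) % n - (k * j) % n) - n := by
  rw [PiZ_of_not_dvd hji, PiZ_of_not_dvd (by rwa [zero_sub, Int.dvd_neg]),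
    PiZ_of_not_dvd (by rwa [sub_zero])]
  simp only [zero_sub, sub_zero, mul_neg]
  rw [Int.neg_emod_of_not_dvd hi, Int.neg_emod_of_not_dvd hki]
  ring

theorem Pi_affine_chart_general (n k : ℕ)
    (h1 : Nat.gcd n k = 1) :
    ∀ i j : ℕ, 1 ≤ i → i < j → j ≤ n - 1 →
      PiZ n k (i : ℤ) (j : ℤ) - PiZ n k (i : ℤ) 0 - PiZ n k 0 (j : ℤ) =
        if n ≤ (k * (j - i)) % n + (k * i) % n then 0 else -(n : ℤ) := by
  intro i j hi hij hj
  have hn : (0 : ℤ) < n := by omega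
  have hji : ¬ (n : ℤ) ∣ j - i := Int.not_dvd_of_pos_of_lt (by omega) (by omega)
  have hki : ¬ (n : ℤ) ∣ k * i := by
    exact_mod_cast fun h =>
      Nat.not_dvd_of_pos_of_lt (by omega) (by omega) (Nat.Coprime.dvd_of_dvd_mul_left h1 h)
  rw [PiZ_sub_PiZ_sub_PiZ (Int.not_dvd_of_pos_of_lt (by omega) (by omega))
    (Int.not_dvd_of_pos_of_lt (by omega) (by omega)) hji hki]
  have index_carry := Int.emod_add_emod_sub_add_emod_eq_ite hn (j - i) i
  have twist_carry := Int.emod_add_emod_sub_add_emod_eq_ite hn (k * (j - i)) (k * i)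
  rw [sub_add_cancel] at index_carry
  rw [← mul_add, sub_add_cancel] at twist_carry
  have no_index_carry : ¬ (n : ℤ) ≤ (j - i) % n + i % n := by
    rw [Int.emod_eq_of_lt (by omega) (by omega), Int.emod_eq_of_lt (by omega) (by omega)]
    omega
  rw [index_carry, twist_carry, if_neg no_index_carry]
  have hcast : ((k * (j - i) % n + k * i % n : ℕ) : ℤ) = (k * (j - i)) % n + (k * i) % n := by
    push_cast [Nat.cast_sub hij.le]
    rfl
  split_ifs <;> omega

/-- For `1 ≤ i < j ≤ n−1`, the quantity
`Π_{ij} − Π_{i0} − Π_{0j}` equals `0` if `((k(j−i)) mod n) + ((ki) mod n) ≥ n`,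
and equals `−n` otherwise. -/
theorem Pi_affine_chart (n k : ℕ) (hn : 3 ≤ n) (hk1 : 1 ≤ k) (hk2 : k < n)
    (h1 : Nat.gcd n k = 1) :
    ∀ i j : ℕ, 1 ≤ i → i < j → j ≤ n - 1 →
      PiZ n k (i : ℤ) (j : ℤ) - PiZ n k (i : ℤ) 0 - PiZ n k 0 (j : ℤ) =
        if n ≤ (k * (j - i)) % n + (k * i) % n then 0 else -(n : ℤ) :=
  Pi_affine_chart_general n k h1
end
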